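/- arXiv:2309.04291 — 10 statements merged into one kernel-verified Lean document; each statement's English description precedes it below -/
import Mathlib

section
/- For every d-regular graph G with d ≥ 2, the star chromatic number of G satisfies χ_s(G) ≥ ⌈(d+4)/2⌉. -/
/-!
Fix a star colouring `f` and, at a vertex `v`, let `t(v)` be the number of colours on `N(v)` and
`s(v)` the number of colours occurring at least twice on `N(v)`. If the colour of `w ∈ N(v)` is
repeated on `N(v)`, then `vw` lies in a bicoloured star centred at `v`, so `v` is the only neighbour
of `w` of its colour. With `p(v)` and `q(w)` the numbers of such pairs `(v, w)` at either end,
this gives `deg v + s(v) ≤ t(v) + p(v)` and `q(w) + s(w) ≤ t(w)`; as `∑ p = ∑ q`,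
`∑ (d + 2 s(v)) ≤ 2 ∑ t(v)`, and `t(v) ≤ k - 1` since `f v` is missing from `N(v)`.
If `s ≥ 1` everywhere this gives `d + 4 ≤ 2k`; otherwise some `N(v)` is rainbow and `d ≤ k - 1`.
-/

/-- A star colouring: a proper colouring with no bicoloured 4-vertex path. -/
def IsStarColoring {V : Type*} {α : Type*} (G : SimpleGraph V) (f : V → α) : Prop :=
  (∀ ⦃u v : V⦄, G.Adj u v → f u ≠ f v) ∧
  ∀ ⦃a b c d : V⦄, G.Adj a b → G.Adj b c → G.Adj c d →
    a ≠ c → a ≠ d → b ≠ d → ¬(f a = f c ∧ f b = f d)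

open Finset

namespace Finset

variable {ι α : Type*} [DecidableEq α]

def repeatedValues (s : Finset ι) (f : ι → α) : Finset α :=
  {c ∈ s.image f | 2 ≤ #{x ∈ s | f x = c}}

lemma card_add_card_repeatedValues_le {s t : Finset ι} (f : ι → α) (hts : t ⊆ s)
    (ht : ∀ x ∈ t, #{y ∈ s | f y = f x} < 2) :
    #t + #(s.repeatedValues f) ≤ #(s.image f) := by
  have hinj : Set.InjOn f t := fun x hx x' hx' hxx' =>
    card_le_one.mp (Nat.lt_succ_iff.mp (ht x hx)) x (by simp [hts hx])
      x' (by simp [hts hx', hxx'])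
  have hdisj : Disjoint (t.image f) (s.repeatedValues f) := by
    rw [disjoint_left]
    rintro _ hc hrep
    obtain ⟨x, hx, rfl⟩ := mem_image.mp hc
    exact (ht x hx).not_ge (mem_filter.mp hrep).2
  calc #t + #(s.repeatedValues f) = #(t.image f ∪ s.repeatedValues f) := by
        rw [card_union_of_disjoint hdisj, card_image_of_injOn hinj]
    _ ≤ #(s.image f) := card_le_card (union_subset (image_subset_image hts) (filter_subset _ _))

lemma card_le_card_image_of_repeatedValues_eq_empty {s : Finset ι} {f : ι → α}
    (h : s.repeatedValues f = ∅) : #s ≤ #(s.image f) := by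
  have := card_add_card_repeatedValues_le f subset_rfl fun x hx => by
    by_contra! h2
    exact (eq_empty_iff_forall_notMem.mp h) (f x) (mem_filter.mpr ⟨mem_image_of_mem f hx, h2⟩)
  omega

end Finset

namespace SimpleGraph

variable {V α : Type*} {G : SimpleGraph V} [Fintype V] [DecidableRel G.Adj] [DecidableEq α]
  {f : V → α}

variable (G f) in
/-- In a star colouring this makes `v` the centre of the bicoloured star containing the edge `vw`. -/
def IsStarCentre (v w : V) : Prop :=
  G.Adj v w ∧ 2 ≤ #{x ∈ G.neighborFinset v | f x = f w}

instance : DecidableRel (G.IsStarCentre f) := fun _ _ => by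
  unfold IsStarCentre; infer_instance

lemma _root_.IsStarColoring.neighbors_colour_eq_singleton (hf : IsStarColoring G f) {v w : V}
    (h : G.IsStarCentre f v w) : {x ∈ G.neighborFinset w | f x = f v} = {v} := by
  obtain ⟨hvw, h2⟩ := h
  obtain ⟨w', hw', hw'w⟩ := exists_mem_ne h2 w
  rw [mem_filter, mem_neighborFinset] at hw'
  ext x
  simp only [mem_filter, mem_neighborFinset, mem_singleton]
  refine ⟨fun ⟨hwx, hx⟩ => ?_, by rintro rfl; exact ⟨hvw.symm, rfl⟩⟩
  by_contra hxv
  have hxw' : x ≠ w' := by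
    rintro rfl
    exact hf.1 hwx hw'.2.symm
  exact hf.2 hwx.symm hvw.symm hw'.1 hxv hxw' (Ne.symm hw'w) ⟨hx, hw'.2.symm⟩

lemma card_image_neighborFinset_add_one_le [Fintype α] (hf : IsStarColoring G f) (v : V) :
    #((G.neighborFinset v).image f) + 1 ≤ Fintype.card α := by
  have hv : f v ∉ (G.neighborFinset v).image f := by
    simp only [mem_image, mem_neighborFinset, not_exists, not_and]
    exact fun w hvw hw => hf.1 hvw hw.symm
  rw [← card_insert_of_notMem hv]
  exact card_le_univ _

lemma degree_add_card_repeatedValues_le (v : V) :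
    G.degree v + #((G.neighborFinset v).repeatedValues f) ≤
      #((G.neighborFinset v).image f) + #{w | G.IsStarCentre f v w} := by
  have hsplit := card_filter_add_card_filter_not (s := G.neighborFinset v)
    (fun w => 2 ≤ #{x ∈ G.neighborFinset v | f x = f w})
  have hcentres : {w ∈ G.neighborFinset v | 2 ≤ #{x ∈ G.neighborFinset v | f x = f w}} =
      ({w | G.IsStarCentre f v w} : Finset V) := by
    ext w; simp only [mem_filter, mem_univ, true_and, mem_neighborFinset]; rfl
  have := card_add_card_repeatedValues_le f (filter_subset _ (G.neighborFinset v))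
    fun w hw => not_le.mp (mem_filter.mp hw).2
  rw [card_neighborFinset_eq_degree, hcentres] at hsplit
  omega

lemma card_starCentres_add_card_repeatedValues_le (hf : IsStarColoring G f) (w : V) :
    #{v | G.IsStarCentre f v w} + #((G.neighborFinset w).repeatedValues f) ≤
      #((G.neighborFinset w).image f) := by
  refine card_add_card_repeatedValues_le f (fun v hv => ?_) fun v hv => ?_
  · exact (mem_neighborFinset _ _ _).mpr (mem_filter.mp hv).2.1.symm
  · rw [hf.neighbors_colour_eq_singleton (mem_filter.mp hv).2, card_singleton]
    omega

lemma sum_degree_add_two_mul_card_repeatedValues_le (hf : IsStarColoring G f) :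
    ∑ v, (G.degree v + 2 * #((G.neighborFinset v).repeatedValues f)) ≤
      2 * ∑ v, #((G.neighborFinset v).image f) := by
  have hcount : ∑ v, #{w | G.IsStarCentre f v w} = ∑ w, #{v | G.IsStarCentre f v w} :=
    sum_card_bipartiteAbove_eq_sum_card_bipartiteBelow _
  have hin := sum_le_sum fun v (_ : v ∈ univ) => G.degree_add_card_repeatedValues_le (f := f) v
  have hout := sum_le_sum fun w (_ : w ∈ univ) => card_starCentres_add_card_repeatedValues_le hf w
  simp only [sum_add_distrib, ← mul_sum] at hin hout ⊢
  omega

lemma sum_degree_add_four_le [Fintype α] (hf : IsStarColoring G f)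
    (hrep : ∀ v, ((G.neighborFinset v).repeatedValues f).Nonempty) :
    ∑ v, (G.degree v + 4) ≤ ∑ _v : V, 2 * Fintype.card α := calc
  ∑ v, (G.degree v + 4)
      ≤ ∑ v, ((G.degree v + 2 * #((G.neighborFinset v).repeatedValues f)) + 2) :=
    sum_le_sum fun v _ => by have := (hrep v).card_pos; omega
  _ = ∑ v, (G.degree v + 2 * #((G.neighborFinset v).repeatedValues f)) + ∑ _v : V, 2 :=
    sum_add_distrib
  _ ≤ 2 * ∑ v, #((G.neighborFinset v).image f) + ∑ _v : V, 2 :=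
    Nat.add_le_add_right (sum_degree_add_two_mul_card_repeatedValues_le hf) _
  _ = ∑ v, 2 * (#((G.neighborFinset v).image f) + 1) := by
    rw [mul_sum, ← sum_add_distrib]
    simp only [mul_add, mul_one]
  _ ≤ ∑ _v : V, 2 * Fintype.card α :=
    sum_le_sum fun v _ => Nat.mul_le_mul_left 2 (card_image_neighborFinset_add_one_le hf v)

lemma degree_add_one_le_of_repeatedValues_eq_empty [Fintype α] (hf : IsStarColoring G f) {v : V}
    (hv : (G.neighborFinset v).repeatedValues f = ∅) : G.degree v + 1 ≤ Fintype.card α := by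
  have := card_le_card_image_of_repeatedValues_eq_empty hv
  have := card_image_neighborFinset_add_one_le hf v
  rw [card_neighborFinset_eq_degree] at *
  omega

end SimpleGraph

open SimpleGraph in
/-- `(d + 5) / 2` is `⌈(d + 4) / 2⌉` in natural-number division. -/
theorem stmt3 {V : Type*} [Fintype V] [Nonempty V] (G : SimpleGraph V) (d k : ℕ)
    (hd : 2 ≤ d) (hreg : ∀ v : V, (G.neighborSet v).ncard = d)
    (hcol : ∃ f : V → Fin k, IsStarColoring G f) :
    (d + 5) / 2 ≤ k := by
  classical
  obtain ⟨f, hf⟩ := hcol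
  have hdeg (v : V) : G.degree v = d := by
    rw [← hreg v, ← card_neighborSet_eq_degree, Set.ncard_eq_toFinset_card', Set.toFinset_card]
  by_cases hrep : ∀ v, ((G.neighborFinset v).repeatedValues f).Nonempty
  · have hsum := sum_degree_add_four_le hf hrep
    simp only [hdeg, sum_const, card_univ, smul_eq_mul, Fintype.card_fin] at hsum
    have := Nat.le_of_mul_le_mul_left hsum Fintype.card_pos
    omega
  · obtain ⟨v, hv⟩ := not_forall.mp hrep
    have := degree_add_one_le_of_repeatedValues_eq_empty hf (not_nonempty_iff_eq_empty.mp hv)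
    rw [hdeg, Fintype.card_fin] at this
    omega
end

section
/- Let p ≥ 2 and let G be a 2p-regular graph that admits a (p+2)-star colouring f. Then every bicoloured component of G under f is isomorphic to the star K_{1,p}. -/
/-- H is a connected component of the subgraph induced by the union of two
distinct colour classes of f. -/
def IsBicolouredComponent {V : Type*} {α : Type*} (G : SimpleGraph V) (f : V → α)
    (H : G.Subgraph) : Prop :=
  H.Connected ∧ ∃ i j : α, i ≠ j ∧
    (∀ v ∈ H.verts, f v = i ∨ f v = j) ∧
    (∀ ⦃u v : V⦄, u ∈ H.verts → G.Adj u v → (f v = i ∨ f v = j) →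
      v ∈ H.verts ∧ H.Adj u v)

open Finset

set_option linter.unusedSectionVars false

namespace Stmt4Aux

variable {V : Type*} [Fintype V] [DecidableEq V] {p : ℕ} (G : SimpleGraph V)
  [DecidableRel G.Adj] (f : V → Fin (p + 2))

/-- neighbours of `v` coloured `c` -/
def nb (v : V) (c : Fin (p + 2)) : Finset V :=
  (G.neighborFinset v).filter (fun w => f w = c)

lemma mem_nb {v w : V} {c : Fin (p + 2)} : w ∈ nb G f v c ↔ G.Adj v w ∧ f w = c := by
  simp [nb]

lemma sum_nb (v : V) : ∑ c, (nb G f v c).card = G.degree v := by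
  rw [SimpleGraph.degree, Finset.card_eq_sum_card_fiberwise (f := f) (t := univ)
    (fun x _ => mem_univ _)]
  rfl

/-- the set of "big" colours at v -/
def T (v : V) : Finset (Fin (p + 2)) := univ.filter (fun c => 2 ≤ (nb G f v c).card)

/-- total number of neighbours in big colours -/
def S (v : V) : ℕ := ∑ c ∈ T G f v, (nb G f v c).card

lemma nb_self_empty (hf : ∀ ⦃u v : V⦄, G.Adj u v → f u ≠ f v) (v : V) :
    nb G f v (f v) = ∅ := by
  ext w
  simp only [mem_nb, Finset.notMem_empty, iff_false]
  rintro ⟨h, hc⟩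
  exact hf h hc.symm

lemma not_both_big (hf : IsStarColoring G f) {u v : V} (huv : G.Adj u v)
    (h1 : 2 ≤ (nb G f u (f v)).card) (h2 : 2 ≤ (nb G f v (f u)).card) : False := by
  obtain ⟨x, hx, hxv⟩ := Finset.exists_mem_ne (s := nb G f u (f v)) (by omega) v
  obtain ⟨y, hy, hyu⟩ := Finset.exists_mem_ne (s := nb G f v (f u)) (by omega) u
  rw [mem_nb] at hx hy
  have hfx : f x = f v := hx.2
  have hfy : f y = f u := hy.2
  have hxy : x ≠ y := by
    intro h; rw [h, hfy] at hfx; exact hf.1 huv hfx.symm.symm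
  exact hf.2 hx.1.symm huv hy.1 hxv hxy hyu.symm ⟨hfx, hfy.symm⟩

end Stmt4Aux

namespace Stmt4Aux

variable {V : Type*} [Fintype V] [DecidableEq V] {p : ℕ} (G : SimpleGraph V)
  [DecidableRel G.Adj] (f : V → Fin (p + 2))

lemma ineq1 (hf1 : ∀ ⦃u v : V⦄, G.Adj u v → f u ≠ f v) (v : V)
    (hdeg : G.degree v = 2 * p) :
    2 * p + 1 + (T G f v).card ≤ S G f v + (p + 2) := by
  have h1 : ∑ c, (nb G f v c).card = 2 * p := by rw [sum_nb, hdeg]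
  have hsplit := Finset.sum_filter_add_sum_filter_not univ
      (fun c => 2 ≤ (nb G f v c).card) (fun c => (nb G f v c).card)
  set N := univ.filter (fun c => ¬ 2 ≤ (nb G f v c).card) with hN
  have hfvN : f v ∈ N := by
    simp [hN, nb_self_empty G f hf1 v]
  have h2 : ∑ c ∈ N.erase (f v), (nb G f v c).card ≤ (N.erase (f v)).card := by
    have := Finset.sum_le_card_nsmul (N.erase (f v)) (fun c => (nb G f v c).card) 1
      (fun c hc => by
        have := (Finset.mem_filter.mp (Finset.mem_of_mem_erase hc)).2
        show (nb G f v c).card ≤ 1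
        omega)
    simpa using this
  have h3 : ∑ c ∈ N, (nb G f v c).card = ∑ c ∈ N.erase (f v), (nb G f v c).card := by
    rw [← Finset.sum_erase_add N _ hfvN, nb_self_empty G f hf1 v]
    simp
  have h4 : (N.erase (f v)).card + 1 = N.card := Finset.card_erase_add_one hfvN
  have h5 : (T G f v).card + N.card = p + 2 := by
    have := Finset.card_filter_add_card_filter_not
      (s := (univ : Finset (Fin (p + 2)))) (p := fun c => 2 ≤ (nb G f v c).card)
    simpa [T, hN] using this
  have h6 : S G f v + ∑ c ∈ N, (nb G f v c).card = 2 * p := by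
    rw [S, T, ← h1, ← hsplit]
  omega

lemma one_le_T (hp : 2 ≤ p) (hf1 : ∀ ⦃u v : V⦄, G.Adj u v → f u ≠ f v) (v : V)
    (hdeg : G.degree v = 2 * p) : 1 ≤ (T G f v).card := by
  by_contra h
  have hT : T G f v = ∅ := by
    rw [← Finset.card_eq_zero]; omega
  have hS : S G f v = 0 := by rw [S, hT]; simp
  have := ineq1 G f hf1 v hdeg
  omega

lemma S_ge (hp : 2 ≤ p) (hf1 : ∀ ⦃u v : V⦄, G.Adj u v → f u ≠ f v) (v : V)
    (hdeg : G.degree v = 2 * p) : p ≤ S G f v := by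
  have := ineq1 G f hf1 v hdeg
  have := one_le_T G f hp hf1 v hdeg
  omega

/-- ordered adjacent pairs -/
def A : Finset (V × V) := univ.filter (fun q => G.Adj q.1 q.2)

lemma sum_A (F : V → V → ℕ) :
    ∑ q ∈ A G, F q.1 q.2 = ∑ v, ∑ w ∈ G.neighborFinset v, F v w := by
  rw [A, Finset.sum_filter, ← Finset.univ_product_univ, Finset.sum_product]
  refine Finset.sum_congr rfl (fun v _ => ?_)
  rw [SimpleGraph.neighborFinset_eq_filter, Finset.sum_filter]

lemma swap_A (F : V → V → ℕ) :
    ∑ q ∈ A G, F q.1 q.2 = ∑ q ∈ A G, F q.2 q.1 := by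
  refine Finset.sum_nbij' (fun q => (q.2, q.1)) (fun q => (q.2, q.1)) ?_ ?_ ?_ ?_ ?_ <;>
    simp [A, SimpleGraph.adj_comm]

lemma card_A : (A G).card = ∑ v, G.degree v := by
  rw [Finset.card_eq_sum_ones, sum_A G (fun _ _ => 1)]
  refine Finset.sum_congr rfl fun v _ => ?_
  rw [SimpleGraph.degree, Finset.card_eq_sum_ones]

lemma S_eq_inner (v : V) :
    ∑ w ∈ G.neighborFinset v, (if 2 ≤ (nb G f v (f w)).card then 1 else 0) = S G f v := by
  rw [← Finset.sum_fiberwise_of_maps_to (g := f) (t := univ) (fun x _ => mem_univ _)]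
  have step : ∀ c : Fin (p + 2),
      ∑ w ∈ (G.neighborFinset v).filter (fun w => f w = c),
        (if 2 ≤ (nb G f v (f w)).card then 1 else 0) =
      (if 2 ≤ (nb G f v c).card then (nb G f v c).card else 0) := by
    intro c
    rw [Finset.sum_congr rfl (fun w hw => by
      rw [(Finset.mem_filter.mp hw).2])]
    rw [Finset.sum_const]
    show (nb G f v c).card • _ = _
    by_cases h : 2 ≤ (nb G f v c).card <;> simp [h]
  rw [Finset.sum_congr rfl (fun c _ => step c)]
  rw [S, ← Finset.sum_filter]
  rfl

end Stmt4Aux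

namespace Stmt4Aux

variable {V : Type*} [Fintype V] [DecidableEq V] {p : ℕ} (G : SimpleGraph V)
  [DecidableRel G.Adj] (f : V → Fin (p + 2))

lemma main_count (hp : 2 ≤ p) (hf : IsStarColoring G f)
    (hdeg : ∀ v : V, G.degree v = 2 * p) :
    (∀ v : V, S G f v = p) ∧
      ∀ ⦃u v : V⦄, G.Adj u v →
        2 ≤ (nb G f u (f v)).card ∨ 2 ≤ (nb G f v (f u)).card := by
  set t : V × V → ℕ := fun q =>
    (if 2 ≤ (nb G f q.1 (f q.2)).card then 1 else 0) +
    (if 2 ≤ (nb G f q.2 (f q.1)).card then 1 else 0) with ht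
  have hsum_first :
      ∑ q ∈ A G, (if 2 ≤ (nb G f q.1 (f q.2)).card then 1 else 0) = ∑ v, S G f v := by
    rw [sum_A G (fun u w => if 2 ≤ (nb G f u (f w)).card then 1 else 0)]
    exact Finset.sum_congr rfl fun v _ => S_eq_inner G f v
  have hswap := swap_A G (fun u w => if 2 ≤ (nb G f u (f w)).card then 1 else 0)
  have hsum_second :
      ∑ q ∈ A G, (if 2 ≤ (nb G f q.2 (f q.1)).card then 1 else 0) = ∑ v, S G f v := by
    rw [← hswap]; exact hsum_first
  have htsum : ∑ q ∈ A G, t q = 2 * ∑ v, S G f v := by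
    rw [ht, Finset.sum_add_distrib, hsum_first, hsum_second]; ring
  have hcardA : (A G).card = Fintype.card V * (2 * p) := by
    rw [card_A]
    rw [Finset.sum_congr rfl (fun v _ => hdeg v), Finset.sum_const, smul_eq_mul, Finset.card_univ]
  have hle1 : ∀ q ∈ A G, t q ≤ 1 := by
    intro q hq
    have hadj : G.Adj q.1 q.2 := (Finset.mem_filter.mp hq).2
    by_cases h1 : 2 ≤ (nb G f q.1 (f q.2)).card
    · by_cases h2 : 2 ≤ (nb G f q.2 (f q.1)).card
      · exact absurd (not_both_big G f hf hadj h1 h2) (by simp)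
      · simp [ht, h1, h2]
    · by_cases h2 : 2 ≤ (nb G f q.2 (f q.1)).card <;> simp [ht, h1, h2]
  have hge : Fintype.card V * p ≤ ∑ v, S G f v := by
    have := Finset.card_nsmul_le_sum univ (S G f) p
      (fun v _ => S_ge G f hp hf.1 v (hdeg v))
    simpa [Finset.card_univ, mul_comm] using this
  have hup : ∑ q ∈ A G, t q ≤ (A G).card := by
    have := Finset.sum_le_card_nsmul (A G) t 1 hle1
    simpa using this
  have hmul : Fintype.card V * (2 * p) = 2 * (Fintype.card V * p) := by ring
  have hSsum : ∑ v, S G f v = Fintype.card V * p := by omega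
  have hSv : ∀ v : V, S G f v = p := by
    intro v
    by_contra hne
    have hlt : p < S G f v :=
      lt_of_le_of_ne (S_ge G f hp hf.1 v (hdeg v)) (Ne.symm hne)
    have hstrict := Finset.sum_lt_sum (s := (univ : Finset V)) (f := fun _ => p)
      (g := S G f) (fun i _ => S_ge G f hp hf.1 i (hdeg i)) ⟨v, mem_univ v, hlt⟩
    rw [Finset.sum_const, smul_eq_mul, Finset.card_univ, hSsum] at hstrict
    omega
  refine ⟨hSv, fun u v hadj => ?_⟩
  have hq : (u, v) ∈ A G := by simp [A, hadj]
  have htq : t (u, v) = 1 := by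
    by_contra hne
    have hlt : t (u, v) < 1 := lt_of_le_of_ne (hle1 _ hq) hne
    have hstrict := Finset.sum_lt_sum (s := A G) (f := t) (g := fun _ => 1)
      hle1 ⟨(u, v), hq, hlt⟩
    rw [Finset.sum_const, smul_eq_mul, mul_one] at hstrict
    omega
  by_contra hcon
  push_neg at hcon
  rw [ht] at htq
  have htq : ((if 2 ≤ (nb G f u (f v)).card then 1 else 0) + if 2 ≤ (nb G f v (f u)).card then 1 else 0) = 1 := htq
  rw [if_neg (Nat.not_le.mpr hcon.1), if_neg (Nat.not_le.mpr hcon.2)] at htq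
  exact absurd htq (by simp)

lemma T_card_one (hp : 2 ≤ p) (hf1 : ∀ ⦃u v : V⦄, G.Adj u v → f u ≠ f v) (v : V)
    (hdeg : G.degree v = 2 * p) (hS : S G f v = p) : (T G f v).card = 1 := by
  have h1 := ineq1 G f hf1 v hdeg
  have h2 := one_le_T G f hp hf1 v hdeg
  omega

lemma big_eq_p (hp : 2 ≤ p) (hf1 : ∀ ⦃u v : V⦄, G.Adj u v → f u ≠ f v) {v : V}
    (hdeg : G.degree v = 2 * p) (hS : S G f v = p) {c : Fin (p + 2)}
    (h : 2 ≤ (nb G f v c).card) : (nb G f v c).card = p := by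
  have hc : c ∈ T G f v := by simp [T, h]
  obtain ⟨a, ha⟩ := Finset.card_eq_one.mp (T_card_one G f hp hf1 v hdeg hS)
  rw [ha, Finset.mem_singleton] at hc
  subst hc
  rw [S, ha, Finset.sum_singleton] at hS
  exact hS

lemma one_le_nb (hp : 2 ≤ p) (hf1 : ∀ ⦃u v : V⦄, G.Adj u v → f u ≠ f v) {v : V}
    (hdeg : G.degree v = 2 * p) (hS : S G f v = p) {c : Fin (p + 2)}
    (hc : c ≠ f v) : 1 ≤ (nb G f v c).card := by
  by_contra h
  have hc0 : (nb G f v c).card = 0 := by omega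
  have h1 : ∑ d, (nb G f v d).card = 2 * p := by rw [sum_nb, hdeg]
  have hsplit := Finset.sum_filter_add_sum_filter_not univ
      (fun d => 2 ≤ (nb G f v d).card) (fun d => (nb G f v d).card)
  set N := univ.filter (fun d => ¬ 2 ≤ (nb G f v d).card) with hN
  have h6 : S G f v + ∑ d ∈ N, (nb G f v d).card = 2 * p := by
    rw [S, T, ← h1, ← hsplit]
  have hfvN : f v ∈ N := by simp [hN, nb_self_empty G f hf1 v]
  have hcN : c ∈ N := by
    simp only [hN, Finset.mem_filter, Finset.mem_univ, true_and]
    omega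
  have hTN : (T G f v).card + N.card = p + 2 := by
    have := Finset.card_filter_add_card_filter_not
      (s := (univ : Finset (Fin (p + 2)))) (p := fun d => 2 ≤ (nb G f v d).card)
    simpa [T, hN] using this
  have hTcard := T_card_one G f hp hf1 v hdeg hS
  have hcN' : c ∈ N.erase (f v) := Finset.mem_erase.mpr ⟨hc, hcN⟩
  have e3 : ∑ d ∈ N, (nb G f v d).card = ∑ d ∈ N.erase (f v), (nb G f v d).card := by
    rw [← Finset.sum_erase_add N _ hfvN, nb_self_empty G f hf1 v]
    simp
  have e4 : ∑ d ∈ N.erase (f v), (nb G f v d).card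
      = ∑ d ∈ (N.erase (f v)).erase c, (nb G f v d).card := by
    rw [← Finset.sum_erase_add (N.erase (f v)) _ hcN', hc0]
    simp
  have e5 : ∑ d ∈ (N.erase (f v)).erase c, (nb G f v d).card
      ≤ ((N.erase (f v)).erase c).card := by
    have := Finset.sum_le_card_nsmul ((N.erase (f v)).erase c)
      (fun d => (nb G f v d).card) 1
      (fun d hd => by
        have hdN := Finset.mem_of_mem_erase (Finset.mem_of_mem_erase hd)
        have := (Finset.mem_filter.mp (hN ▸ hdN)).2
        show (nb G f v d).card ≤ 1
        omega)
    simpa using this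
  have e6 : ((N.erase (f v)).erase c).card + 1 = (N.erase (f v)).card :=
    Finset.card_erase_add_one hcN'
  have e7 : (N.erase (f v)).card + 1 = N.card := Finset.card_erase_add_one hfvN
  omega

end Stmt4Aux

namespace Stmt4Aux

variable {V : Type*} [Fintype V] [DecidableEq V] {p : ℕ} (G : SimpleGraph V)
  [DecidableRel G.Adj] (f : V → Fin (p + 2))

lemma component_iso (hp : 2 ≤ p) (hf : IsStarColoring G f)
    (hdeg : ∀ v : V, G.degree v = 2 * p)
    (H : G.Subgraph) (hconn : H.Connected) (a b : Fin (p + 2))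
    (hcol : ∀ v ∈ H.verts, f v = a ∨ f v = b)
    (hclosed : ∀ ⦃x y : V⦄, x ∈ H.verts → G.Adj x y → (f y = a ∨ f y = b) →
      y ∈ H.verts ∧ H.Adj x y)
    (u : V) (hu : u ∈ H.verts) (hfu : f u = a) (hbig : 2 ≤ (nb G f u b).card) :
    Nonempty (H.coe ≃g completeBipartiteGraph (Fin 1) (Fin p)) := by
  have hS := (main_count G f hp hf hdeg).1
  set L := nb G f u b with hL
  have hLcard : L.card = p := big_eq_p G f hp hf.1 (hdeg u) (hS u) hbig
  have hLmem : ∀ w ∈ L, G.Adj u w ∧ f w = b := fun w hw => (mem_nb G f).mp hw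
  have hLsub : ∀ w ∈ L, w ∈ H.verts ∧ H.Adj u w := fun w hw =>
    hclosed hu (hLmem w hw).1 (Or.inr (hLmem w hw).2)
  have huL : u ∉ L := fun h => G.loopless.irrefl u (hLmem u h).1
  have hCstep : ∀ x y : V, (x = u ∨ x ∈ L) → H.Adj x y → (y = u ∨ y ∈ L) := by
    intro x y hx hxy
    have hyv : y ∈ H.verts := H.edge_vert hxy.symm
    have hgxy : G.Adj x y := H.adj_sub hxy
    rcases hx with rfl | hxL
    · right
      have hya : f y ≠ a := by rw [← hfu]; exact fun h => hf.1 hgxy h.symm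
      have hyb : f y = b := (hcol y hyv).resolve_left hya
      exact (mem_nb G f).mpr ⟨hgxy, hyb⟩
    · left
      obtain ⟨hux, hfx⟩ := hLmem x hxL
      have hfy : f y = a := by
        rcases hcol y hyv with h | h
        · exact h
        · exact absurd (hfx.trans h.symm) (hf.1 hgxy)
      have hcard1 : (nb G f x a).card ≤ 1 := by
        by_contra hcon
        exact not_both_big G f hf hux (by rwa [hfx]) (by rw [hfu]; omega)
      have hu' : u ∈ nb G f x a := (mem_nb G f).mpr ⟨hux.symm, hfu⟩
      have hy' : y ∈ nb G f x a := (mem_nb G f).mpr ⟨hgxy, hfy⟩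
      exact Finset.card_le_one.mp hcard1 _ hy' _ hu'
  have hverts : ∀ x ∈ H.verts, x = u ∨ x ∈ L := by
    intro x hx
    obtain ⟨w⟩ := hconn.preconnected ⟨u, hu⟩ ⟨x, hx⟩
    suffices h : ∀ (s t : H.verts) (w : H.coe.Walk s t),
        ((s : V) = u ∨ (s : V) ∈ L) → ((t : V) = u ∨ (t : V) ∈ L) by
      exact h _ _ w (Or.inl rfl)
    intro s t w
    induction w with
    | nil => exact id
    | cons h w ih =>
      intro hs
      rw [SimpleGraph.Subgraph.coe_adj] at h
      exact ih (hCstep _ _ hs h)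
  have hAdjChar : ∀ x y : V, H.Adj x y ↔ ((x = u ∧ y ∈ L) ∨ (y = u ∧ x ∈ L)) := by
    intro x y
    constructor
    · intro hxy
      have hx := hverts x (H.edge_vert hxy)
      have hy := hverts y (H.edge_vert hxy.symm)
      have hgxy := H.adj_sub hxy
      rcases hx with rfl | hxL
      · rcases hy with rfl | hyL
        · exact absurd hgxy (G.loopless.irrefl _)
        · exact Or.inl ⟨rfl, hyL⟩
      · rcases hy with rfl | hyL
        · exact Or.inr ⟨rfl, hxL⟩
        · exact absurd ((hLmem x hxL).2.trans (hLmem y hyL).2.symm) (hf.1 hgxy)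
    · rintro (⟨rfl, hyL⟩ | ⟨rfl, hxL⟩)
      · exact (hLsub _ hyL).2
      · exact ((hLsub _ hxL).2).symm
  have e1 : {x // x ∈ L} ≃ Fin p := Finset.equivFinOfCardEq hLcard
  refine ⟨{ toFun := fun x => if hx : (x : V) ∈ L then Sum.inr (e1 ⟨x, hx⟩) else Sum.inl 0,
            invFun := fun s => Sum.rec (fun _ => ⟨u, hu⟩)
              (fun k => ⟨(e1.symm k : V), (hLsub _ (e1.symm k).2).1⟩) s,
            left_inv := ?_, right_inv := ?_, map_rel_iff' := ?_ }⟩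
  · intro x
    by_cases hx : (x : V) ∈ L
    · simp only [dif_pos hx]
      apply Subtype.ext
      show ((e1.symm (e1 ⟨x, hx⟩) : {x // x ∈ L}) : V) = x
      rw [Equiv.symm_apply_apply]
    · simp only [dif_neg hx]
      exact Subtype.ext ((hverts x x.2).resolve_right hx).symm
  · rintro (k | k)
    · show (if hx : u ∈ L then Sum.inr (e1 ⟨u, hx⟩) else Sum.inl 0) = Sum.inl k
      rw [dif_neg huL]
      congr
      omega
    · show (if hx : ((e1.symm k : V)) ∈ L then Sum.inr (e1 ⟨_, hx⟩) else Sum.inl 0) = Sum.inr k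
      rw [dif_pos (e1.symm k).2]
      congr 1
      have h2 : (⟨(e1.symm k : V), (e1.symm k).2⟩ : {x // x ∈ L}) = e1.symm k :=
        Subtype.ext rfl
      rw [h2, Equiv.apply_symm_apply]
  · intro x y
    simp only [Equiv.coe_fn_mk]
    rw [SimpleGraph.Subgraph.coe_adj, hAdjChar]
    have hxu : (x : V) ∈ L → (x : V) ≠ u := fun h hh => huL (hh ▸ h)
    have hyu : (y : V) ∈ L → (y : V) ≠ u := fun h hh => huL (hh ▸ h)
    by_cases hx : (x : V) ∈ L <;> by_cases hy : (y : V) ∈ L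
    · rw [dif_pos hx, dif_pos hy]
      simp only [completeBipartiteGraph]
      constructor
      · rintro (⟨h1, h2⟩ | ⟨h1, h2⟩) <;> simp at h1 h2
      · rintro (⟨h1, h2⟩ | ⟨h1, h2⟩)
        · exact absurd h1 (hxu hx)
        · exact absurd h1 (hyu hy)
    · rw [dif_pos hx, dif_neg hy]
      have h3 : (y : V) = u := (hverts _ y.2).resolve_right hy
      simp only [completeBipartiteGraph]
      constructor
      · intro _; exact Or.inr ⟨h3, hx⟩
      · intro _; simp
    · rw [dif_neg hx, dif_pos hy]
      have h3 : (x : V) = u := (hverts _ x.2).resolve_right hx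
      simp only [completeBipartiteGraph]
      constructor
      · intro _; exact Or.inl ⟨h3, hy⟩
      · intro _; simp
    · rw [dif_neg hx, dif_neg hy]
      simp only [completeBipartiteGraph]
      constructor
      · rintro (⟨h1, h2⟩ | ⟨h1, h2⟩) <;> simp at h1 h2
      · rintro (⟨h1, h2⟩ | ⟨h1, h2⟩)
        · exact absurd h2 hy
        · exact absurd h2 hx

end Stmt4Aux


/-- In a (p+2)-star coloured 2p-regular graph (p ≥ 2), every bicoloured
component is isomorphic to K_{1,p}. -/
theorem stmt4 {V : Type*} [Fintype V] (G : SimpleGraph V) (p : ℕ) (hp : 2 ≤ p)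
    (hreg : ∀ v : V, (G.neighborSet v).ncard = 2 * p)
    (f : V → Fin (p + 2)) (hf : IsStarColoring G f)
    (H : G.Subgraph) (hH : IsBicolouredComponent G f H) :
    Nonempty (H.coe ≃g completeBipartiteGraph (Fin 1) (Fin p)) := by
  classical
  obtain ⟨hconn, i, j, hij, hcol, hclosed⟩ := hH
  have hdeg : ∀ v : V, G.degree v = 2 * p := by
    intro v
    rw [← hreg v, Set.ncard_eq_toFinset_card', Set.toFinset_card,
      SimpleGraph.card_neighborSet_eq_degree]
  have hS := (Stmt4Aux.main_count G f hp hf hdeg).1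
  have hedge := (Stmt4Aux.main_count G f hp hf hdeg).2
  obtain ⟨v₀, hv₀⟩ := hconn.nonempty
  rcases hcol v₀ hv₀ with hc | hc
  · have hne : j ≠ f v₀ := by rw [hc]; exact hij.symm
    have h1 : 1 ≤ (Stmt4Aux.nb G f v₀ j).card :=
      Stmt4Aux.one_le_nb G f hp hf.1 (hdeg v₀) (hS v₀) hne
    obtain ⟨w, hw⟩ := (Finset.card_pos (s := Stmt4Aux.nb G f v₀ j)).mp (by omega)
    obtain ⟨hadj, hfw⟩ := (Stmt4Aux.mem_nb G f).mp hw
    have hwH := hclosed hv₀ hadj (Or.inr hfw)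
    rcases hedge hadj with hbig | hbig
    · exact Stmt4Aux.component_iso G f hp hf hdeg H hconn i j hcol hclosed v₀ hv₀ hc
        (by rwa [hfw] at hbig)
    · exact Stmt4Aux.component_iso G f hp hf hdeg H hconn j i
        (fun v hv => (hcol v hv).symm)
        (fun x y hx hxy hcy => hclosed hx hxy hcy.symm)
        w hwH.1 hfw (by rwa [hc] at hbig)
  · have hne : i ≠ f v₀ := by rw [hc]; exact hij
    have h1 : 1 ≤ (Stmt4Aux.nb G f v₀ i).card :=
      Stmt4Aux.one_le_nb G f hp hf.1 (hdeg v₀) (hS v₀) hne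
    obtain ⟨w, hw⟩ := (Finset.card_pos (s := Stmt4Aux.nb G f v₀ i)).mp (by omega)
    obtain ⟨hadj, hfw⟩ := (Stmt4Aux.mem_nb G f).mp hw
    have hwH := hclosed hv₀ hadj (Or.inl hfw)
    rcases hedge hadj with hbig | hbig
    · exact Stmt4Aux.component_iso G f hp hf hdeg H hconn j i
        (fun v hv => (hcol v hv).symm)
        (fun x y hx hxy hcy => hclosed hx hxy hcy.symm)
        v₀ hv₀ hc (by rwa [hfw] at hbig)
    · exact Stmt4Aux.component_iso G f hp hf hdeg H hconn i j hcol hclosed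
        w hwH.1 hfw (by rwa [hc] at hbig)
end

section
/- Let p ≥ 2 and let G be a 2p-regular graph with a (p+2)-star colouring f. Then all p+2 colour classes of f have the same cardinality, namely |V(G)|/(p+2); in particular f is an equitable colouring. -/
/-!
Write `d(v, c)` for the number of neighbours of `v` coloured `c`. In a star colouring every edge
`vu` has an end, say `v`, with `d(v, f u) = 1`: otherwise `u` and `v` have further neighbours of
each other's colour, and these span a bicoloured `P₄`. A vertex of degree `2p` sees at most `p`
of the `p + 1` other colours exactly once (else its degree is `p + 1`), so comparing the `p|V|`
edges with these singleton colours forces equality everywhere: each vertex sees `p` colours once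
and one colour `p` times, and each edge has exactly one such end.

Fix a colour `i` with class `A`, let `B` be the vertices seeing `i` once and `C` the rest of
`V \ A`, which see `i` exactly `p` times. Exactness gives `|B| = p|A|`, and counting the edges
at `A` gives `2p|A| = |B| + p|C|`. Hence `|C| = |A|` and `|V| = (p + 2)|A|`.
-/

open Finset

theorem Finset.sum_filter_eq_one_eq_card {ι : Type*} (s : Finset ι) (g : ι → ℕ) :
    ∑ x ∈ s with g x = 1, g x = #{x ∈ s | g x = 1} :=
  (sum_congr rfl fun _ hx => (mem_filter.1 hx).2).trans (card_eq_sum_ones _).symm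

namespace SimpleGraph

variable {V α : Type*} [Fintype V] (G : SimpleGraph V) [DecidableRel G.Adj]

theorem sum_card_filter_neighborFinset_comm (P : V → V → Prop) [∀ v u, Decidable (P v u)] :
    ∑ v, #{u ∈ G.neighborFinset v | P v u} = ∑ v, #{u ∈ G.neighborFinset v | P u v} := by
  have := sum_card_bipartiteAbove_eq_sum_card_bipartiteBelow (s := univ) (t := univ)
    (r := fun v u => G.Adj v u ∧ P v u)
  convert this using 3 with v _ v _
  · ext u; simp [bipartiteAbove]
  · ext u; simp [bipartiteBelow, adj_comm]

variable [DecidableEq α] (f : V → α)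

def colorDegree (v : V) (c : α) : ℕ := #{u ∈ G.neighborFinset v | f u = c}

variable {G f}

theorem sum_colorDegree [Fintype α] (v : V) : ∑ c, G.colorDegree f v c = G.degree v :=
  (card_eq_sum_card_fiberwise fun _ _ => mem_univ _).symm

theorem colorDegree_pos_of_adj {v u : V} (h : G.Adj v u) : 0 < G.colorDegree f v (f u) :=
  card_pos.2 ⟨u, by simpa using h⟩

theorem colorDegree_self_eq_zero (hf : ∀ ⦃u v⦄, G.Adj u v → f u ≠ f v) (v : V) :
    G.colorDegree f v (f v) = 0 :=
  card_eq_zero.2 <| filter_eq_empty_iff.2 fun _ hu => hf ((G.mem_neighborFinset _ _).1 hu).symm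

theorem card_filter_colorDegree_eq_one_and_eq (v : V) (c : α) :
    #{u ∈ G.neighborFinset v | G.colorDegree f v (f u) = 1 ∧ f u = c} =
      if G.colorDegree f v c = 1 then 1 else 0 := by
  split_ifs with hc
  · refine (congrArg card (filter_congr fun u _ => ?_)).trans hc
    exact ⟨And.right, fun h => ⟨by rw [h]; exact hc, h⟩⟩
  · exact card_eq_zero.2 <| filter_eq_empty_iff.2 fun u _ ⟨h1, h2⟩ => hc (h2 ▸ h1)

theorem card_neighborFinset_filter_colorDegree_eq_one [Fintype α] (v : V) :
    #{u ∈ G.neighborFinset v | G.colorDegree f v (f u) = 1} =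
      #{c | G.colorDegree f v c = 1} := by
  rw [card_eq_sum_card_fiberwise (f := f) (t := univ) fun _ _ => mem_univ _, card_filter]
  simp only [filter_filter, card_filter_colorDegree_eq_one_and_eq]

theorem sum_colorDegree_eq_sum_degree (c : α) :
    ∑ u, G.colorDegree f u c = ∑ v with f v = c, G.degree v := by
  rw [sum_filter]
  simp_rw [colorDegree, sum_card_filter_neighborFinset_comm G (fun u w => f w = c)]
  refine sum_congr rfl fun v _ => ?_
  split_ifs with h <;> simp [h]

theorem _root_.IsStarColoring.colorDegree_eq_one_or (hf : IsStarColoring G f) {v u : V}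
    (h : G.Adj v u) : G.colorDegree f v (f u) = 1 ∨ G.colorDegree f u (f v) = 1 := by
  by_contra! hne
  have h₁ : 1 < G.colorDegree f v (f u) :=
    lt_of_le_of_ne (colorDegree_pos_of_adj h) hne.1.symm
  have h₂ : 1 < G.colorDegree f u (f v) :=
    lt_of_le_of_ne (colorDegree_pos_of_adj h.symm) hne.2.symm
  obtain ⟨w, hw, hwu⟩ := exists_mem_ne h₁ u
  obtain ⟨w', hw', hw'v⟩ := exists_mem_ne h₂ v
  simp only [mem_filter, mem_neighborFinset] at hw hw'
  refine hf.2 hw.1.symm h hw'.1 hwu (fun e => hf.1 h ?_) hw'v.symm ⟨hw.2, hw'.2.symm⟩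
  rw [← hw.2, e, hw'.2]

theorem _root_.IsStarColoring.card_add_card_eq_degree_add_card [DecidableEq V]
    (hf : IsStarColoring G f) (v : V) :
    #{u ∈ G.neighborFinset v | G.colorDegree f v (f u) = 1} +
        #{u ∈ G.neighborFinset v | G.colorDegree f u (f v) = 1} =
      G.degree v + #{u ∈ G.neighborFinset v |
        G.colorDegree f v (f u) = 1 ∧ G.colorDegree f u (f v) = 1} := by
  rw [← card_neighborFinset_eq_degree, filter_and, ← card_union_add_card_inter, ← filter_or,
    filter_true_of_mem fun u hu => hf.colorDegree_eq_one_or ((G.mem_neighborFinset _ _).1 hu)]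

section Regular

variable [Fintype α] {p : ℕ} (hα : Fintype.card α = p + 2)
include hα

theorem card_filter_colorDegree_eq_one_le (hf : ∀ ⦃u v⦄, G.Adj u v → f u ≠ f v) (hp : 2 ≤ p)
    {v : V} (hv : G.degree v = 2 * p) : #{c | G.colorDegree f v c = 1} ≤ p := by
  have hsub : ({c | G.colorDegree f v c = 1} : Finset α) ⊆ univ.erase (f v) := fun c hc =>
    mem_erase.2 ⟨by rintro rfl; simp [colorDegree_self_eq_zero hf] at hc, mem_univ _⟩
  by_contra! hlt
  have hS : ({c | G.colorDegree f v c = 1} : Finset α) = univ.erase (f v) :=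
    eq_of_subset_of_card_le hsub (by rw [card_erase_of_mem (mem_univ _), card_univ, hα]; omega)
  have hsum : ∑ c, G.colorDegree f v c = G.degree v := sum_colorDegree v
  rw [← add_sum_erase _ _ (mem_univ (f v)), colorDegree_self_eq_zero hf, ← hS,
    sum_filter_eq_one_eq_card, hS, card_erase_of_mem (mem_univ _), card_univ, hα, hv] at hsum
  omega

theorem colorDegree_eq_of_ne_one (hf : ∀ ⦃u v⦄, G.Adj u v → f u ≠ f v) {u : V}
    (hu : G.degree u = 2 * p) (hs : #{c | G.colorDegree f u c = 1} = p) {c : α} (hc : c ≠ f u)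
    (h1 : G.colorDegree f u c ≠ 1) : G.colorDegree f u c = p := by
  have hT : ({c | G.colorDegree f u c ≠ 1} : Finset α) = {f u, c} := by
    refine (eq_of_subset_of_card_le (insert_subset_iff.2 ⟨?_, singleton_subset_iff.2 ?_⟩) ?_).symm
    · simp [colorDegree_self_eq_zero hf]
    · simpa using h1
    · have : #{c | G.colorDegree f u c = 1} + #{c | G.colorDegree f u c ≠ 1} = Fintype.card α :=
        card_filter_add_card_filter_not _
      rw [card_pair hc.symm]
      omega
  have hsum : ∑ c, G.colorDegree f u c = 2 * p := (sum_colorDegree u).trans hu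
  rw [← sum_filter_add_sum_filter_not univ fun c => G.colorDegree f u c = 1,
    sum_filter_eq_one_eq_card, hs, hT, sum_pair hc.symm, colorDegree_self_eq_zero hf] at hsum
  omega

variable [DecidableEq V]

theorem _root_.IsStarColoring.sum_card_filter_colorDegree_eq_one_eq_and_sum_card_eq_zero
    (hf : IsStarColoring G f) (hp : 2 ≤ p) (hreg : ∀ v, G.degree v = 2 * p) :
    ∑ v, #{c | G.colorDegree f v c = 1} = p * Fintype.card V ∧
      ∑ v, #{u ∈ G.neighborFinset v |
        G.colorDegree f v (f u) = 1 ∧ G.colorDegree f u (f v) = 1} = 0 := by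
  have hle : ∑ v, #{c | G.colorDegree f v c = 1} ≤ p * Fintype.card V :=
    (sum_le_sum fun v _ => card_filter_colorDegree_eq_one_le hα hf.1 hp (hreg v)).trans_eq
      (by simp [mul_comm])
  have hsum := sum_congr rfl fun v (_ : v ∈ univ) => hf.card_add_card_eq_degree_add_card v
  rw [sum_add_distrib, sum_add_distrib,
    ← sum_card_filter_neighborFinset_comm G fun v u => G.colorDegree f v (f u) = 1] at hsum
  simp only [card_neighborFinset_filter_colorDegree_eq_one, hreg, sum_const, card_univ,
    smul_eq_mul] at hsum
  rw [show Fintype.card V * (2 * p) = 2 * (p * Fintype.card V) by ring] at hsum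
  omega

theorem _root_.IsStarColoring.card_filter_colorDegree_eq_one (hf : IsStarColoring G f)
    (hp : 2 ≤ p) (hreg : ∀ v, G.degree v = 2 * p) (v : V) :
    #{c | G.colorDegree f v c = 1} = p := by
  have hle := fun v => card_filter_colorDegree_eq_one_le hα hf.1 hp (hreg v)
  refine (sum_eq_sum_iff_of_le fun v (_ : v ∈ univ) => hle v).1 ?_ v (mem_univ v)
  rw [(hf.sum_card_filter_colorDegree_eq_one_eq_and_sum_card_eq_zero hα hp hreg).1, sum_const,
    card_univ, smul_eq_mul, mul_comm]

theorem _root_.IsStarColoring.colorDegree_eq_one_iff_ne (hf : IsStarColoring G f)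
    (hp : 2 ≤ p) (hreg : ∀ v, G.degree v = 2 * p) {v u : V} (h : G.Adj v u) :
    G.colorDegree f v (f u) = 1 ↔ G.colorDegree f u (f v) ≠ 1 := by
  have hnot := sum_eq_zero_iff.1
    (hf.sum_card_filter_colorDegree_eq_one_eq_and_sum_card_eq_zero hα hp hreg).2 v (mem_univ v)
  rw [card_eq_zero, filter_eq_empty_iff] at hnot
  exact ⟨fun h₁ h₂ => hnot ((G.mem_neighborFinset _ _).2 h) ⟨h₁, h₂⟩,
    (hf.colorDegree_eq_one_or h).resolve_right⟩

theorem _root_.IsStarColoring.card_colorDegree_eq_one_eq_mul (hf : IsStarColoring G f)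
    (hp : 2 ≤ p) (hreg : ∀ v, G.degree v = 2 * p) (i : α) :
    #{u | G.colorDegree f u i = 1} = p * #{v | f v = i} := by
  calc #{u | G.colorDegree f u i = 1}
      = ∑ u, #{w ∈ G.neighborFinset u | G.colorDegree f u (f w) = 1 ∧ f w = i} := by
        rw [card_filter]
        exact sum_congr rfl fun u _ => (card_filter_colorDegree_eq_one_and_eq u i).symm
    _ = ∑ v, #{w ∈ G.neighborFinset v | G.colorDegree f w (f v) = 1 ∧ f v = i} :=
        sum_card_filter_neighborFinset_comm G fun u w => G.colorDegree f u (f w) = 1 ∧ f w = i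
    _ = ∑ v with f v = i, #{w ∈ G.neighborFinset v | G.colorDegree f v (f w) ≠ 1} := by
        rw [sum_filter]
        refine sum_congr rfl fun v _ => ?_
        split_ifs with hv
        · refine congrArg card (filter_congr fun w hw => ?_)
          rw [hf.colorDegree_eq_one_iff_ne hα hp hreg ((G.mem_neighborFinset _ _).1 hw).symm]
          simp [hv]
        · simp [hv]
    _ = ∑ v with f v = i, p := sum_congr rfl fun v _ => by
        have : #{w ∈ G.neighborFinset v | G.colorDegree f v (f w) = 1} +
            #{w ∈ G.neighborFinset v | G.colorDegree f v (f w) ≠ 1} = #(G.neighborFinset v) :=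
          card_filter_add_card_filter_not _
        rw [card_neighborFinset_filter_colorDegree_eq_one,
          hf.card_filter_colorDegree_eq_one hα hp hreg, card_neighborFinset_eq_degree,
          hreg] at this
        omega
    _ = p * #{v | f v = i} := by rw [sum_const, smul_eq_mul, mul_comm]

theorem _root_.IsStarColoring.card_mul_card_fiber_eq (hf : IsStarColoring G f)
    (hp : 2 ≤ p) (hreg : ∀ v, G.degree v = 2 * p) (i : α) :
    (p + 2) * #{v | f v = i} = Fintype.card V := by
  set A : Finset V := {v | f v = i}
  set B : Finset V := {u | G.colorDegree f u i = 1}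
  set C : Finset V := {u ∈ {u | G.colorDegree f u i ≠ 1} | f u ≠ i}
  have hsum_deg : ∑ u, G.colorDegree f u i = 2 * p * #A := by
    rw [sum_colorDegree_eq_sum_degree, sum_congr rfl fun v _ => hreg v, sum_const, smul_eq_mul,
      mul_comm]
  have hsum_split : ∑ u, G.colorDegree f u i = #B + p * #C := by
    rw [← sum_filter_add_sum_filter_not univ fun u => G.colorDegree f u i = 1,
      sum_filter_eq_one_eq_card,
      ← sum_filter_add_sum_filter_not _ fun u => f u = i]
    have hA : ∀ u ∈ ({u ∈ {u | G.colorDegree f u i ≠ 1} | f u = i} : Finset V),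
        G.colorDegree f u i = 0 := fun u hu => by
      rw [← (mem_filter.1 hu).2]
      exact colorDegree_self_eq_zero hf.1 u
    have hC : ∀ u ∈ C, G.colorDegree f u i = p := fun u hu => by
      simp only [C, mem_filter, mem_univ, true_and] at hu
      exact colorDegree_eq_of_ne_one hα hf.1 (hreg u)
        (hf.card_filter_colorDegree_eq_one hα hp hreg u) (Ne.symm hu.2) hu.1
    rw [sum_eq_zero hA, sum_congr rfl hC, sum_const, smul_eq_mul, zero_add, mul_comm]
  have hcard : #A + #B + #C = Fintype.card V := by
    have h₁ : #B + #{u | G.colorDegree f u i ≠ 1} = Fintype.card V :=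
      card_filter_add_card_filter_not _
    have h₂ : #{u ∈ {u | G.colorDegree f u i ≠ 1} | f u = i} + #C =
        #{u | G.colorDegree f u i ≠ 1} := card_filter_add_card_filter_not _
    have h₃ : ({u ∈ {u | G.colorDegree f u i ≠ 1} | f u = i} : Finset V) = A := by
      rw [filter_filter]
      refine filter_congr fun u _ => and_iff_right_of_imp ?_
      rintro rfl
      simp [colorDegree_self_eq_zero hf.1]
    rw [h₃] at h₂
    omega
  have hB : #B = p * #A := hf.card_colorDegree_eq_one_eq_mul hα hp hreg i
  have hCA : #C = #A := Nat.eq_of_mul_eq_mul_left (by omega : 0 < p) (by linarith)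
  linarith

end Regular

end SimpleGraph

/-- In a (p+2)-star coloured 2p-regular graph (p ≥ 2), all colour classes have
the same cardinality, namely |V|/(p+2); in particular the colouring is equitable. -/
theorem stmt5 {V : Type*} [Fintype V] (G : SimpleGraph V) (p : ℕ) (hp : 2 ≤ p)
    (hreg : ∀ v : V, (G.neighborSet v).ncard = 2 * p)
    (f : V → Fin (p + 2)) (hf : IsStarColoring G f) :
    (∀ i j : Fin (p + 2),
      (Finset.univ.filter fun v => f v = i).card =
        (Finset.univ.filter fun v => f v = j).card) ∧
    ∀ i : Fin (p + 2),
      (p + 2) * (Finset.univ.filter fun v => f v = i).card = Fintype.card V := by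
  classical
  have hdeg : ∀ v, G.degree v = 2 * p := fun v => by
    rw [← SimpleGraph.card_neighborFinset_eq_degree, SimpleGraph.neighborFinset_def,
      ← Set.ncard_eq_toFinset_card', hreg v]
  have hcount := hf.card_mul_card_fiber_eq (Fintype.card_fin _) hp hdeg
  exact ⟨fun i j => Nat.eq_of_mul_eq_mul_left (by omega) ((hcount i).trans (hcount j).symm),
    hcount⟩
end

section
/- Let p ≥ 2 and let G be a 2p-regular graph with a (p+2)-star colouring f. Then f is a fall colouring: every vertex of G sees all p+2 colours in its closed neighbourhood. -/
open Finset

theorem Finset.card_lt_card_filter_add_card_image {α β : Type*} [DecidableEq α] [DecidableEq β]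
    {s : Finset α} {g : α → β} (h : #(s.image g) < #s) :
    #s < #(s.filter fun x => ∃ y ∈ s, y ≠ x ∧ g y = g x) + #(s.image g) := by
  set P : α → Prop := fun x => ∃ y ∈ s, y ≠ x ∧ g y = g x
  have hE : #(s.filter fun x => ¬P x) + 1 ≤ #(s.image g) := by
    have hninj : ¬Set.InjOn g s := fun hinj => h.ne (card_image_iff.mpr hinj)
    simp only [Set.InjOn, not_forall] at hninj
    obtain ⟨x, hx, y, hy, hgxy, hxy⟩ := hninj
    have hinj : Set.InjOn g (s.filter fun x => ¬P x) := by
      intro a ha b hb hab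
      by_contra hne
      exact (mem_filter.mp hb).2 ⟨a, (mem_filter.mp ha).1, hne, hab⟩
    have hssub : (s.filter fun x => ¬P x).image g ⊂ s.image g := by
      refine ssubset_iff_of_subset (image_subset_image (filter_subset _ _)) |>.mpr
        ⟨g x, mem_image_of_mem g hx, ?_⟩
      intro hgx
      obtain ⟨z, hz, hgz⟩ := mem_image.mp hgx
      obtain ⟨-, hzP⟩ := mem_filter.mp hz
      rcases eq_or_ne x z with rfl | hxz
      · exact hzP ⟨y, hy, Ne.symm hxy, hgxy.symm⟩
      · exact hzP ⟨x, hx, hxz, hgz.symm⟩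
    simpa [card_image_of_injOn hinj] using card_lt_card hssub
  have := card_filter_add_card_filter_not (s := s) P
  change #s < #(s.filter P) + #(s.image g)
  omega

namespace SimpleGraph

variable {V α : Type*} (G : SimpleGraph V) (f : V → α)

def RepeatsColor (v u : V) : Prop :=
  G.Adj v u ∧ ∃ w, G.Adj v w ∧ w ≠ u ∧ f w = f u

variable {G f}

theorem _root_.IsStarColoring.not_repeatsColor_and_repeatsColor (hf : IsStarColoring G f)
    {v u : V} : ¬(G.RepeatsColor f v u ∧ G.RepeatsColor f u v) := by
  rintro ⟨⟨hvu, w, hvw, hwu, hfw⟩, ⟨-, x, hux, hxv, hfx⟩⟩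
  have hwx : w ≠ x := by
    rintro rfl
    exact hf.1 hvu (hfx.symm.trans hfw)
  exact hf.2 hvw.symm hvu hux hwu hwx hxv.symm ⟨hfw, hfx.symm⟩

variable [Fintype V] [DecidableEq V] [DecidableRel G.Adj]

theorem two_mul_sum_card_filter_le_sum_degree (R : V → V → Prop) [DecidableRel R]
    (hadj : ∀ v u, R v u → G.Adj v u) (hasymm : ∀ v u, R v u → ¬R u v) :
    2 * ∑ v, #(univ.filter (R v)) ≤ ∑ v, G.degree v := by
  have hcount : ∀ v, #(univ.filter (R v)) + #(univ.filter fun u => R u v) ≤ G.degree v := by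
    intro v
    rw [← card_union_of_disjoint (disjoint_filter.mpr fun u _ => hasymm v u),
      ← card_neighborFinset_eq_degree]
    refine card_le_card fun u hu => ?_
    rw [mem_neighborFinset]
    rcases mem_union.mp hu with h | h
    · exact hadj _ _ (mem_filter.mp h).2
    · exact (hadj _ _ (mem_filter.mp h).2).symm
  have hswap : ∑ v, #(univ.filter fun u => R u v) = ∑ v, #(univ.filter (R v)) := by
    simp only [card_filter]
    exact sum_comm
  calc 2 * ∑ v, #(univ.filter (R v))
      = ∑ v, (#(univ.filter (R v)) + #(univ.filter fun u => R u v)) := by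
        rw [sum_add_distrib, hswap, two_mul]
    _ ≤ ∑ v, G.degree v := sum_le_sum fun v _ => hcount v

theorem degree_lt_card_repeatsColor_add_card [DecidableEq α]
    [DecidableRel (G.RepeatsColor f)] {v : V} {C : Finset α}
    (hC : ∀ u, G.Adj v u → f u ∈ C) (hlt : #C < G.degree v) :
    G.degree v < #(univ.filter (G.RepeatsColor f v)) + #C := by
  have himage : (G.neighborFinset v).image f ⊆ C := by
    simpa [image_subset_iff] using hC
  have hrep : (G.neighborFinset v).filter (fun x => ∃ y ∈ G.neighborFinset v, y ≠ x ∧ f y = f x)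
      = univ.filter (G.RepeatsColor f v) := by
    ext u
    simp [RepeatsColor]
  have := card_le_card himage
  have := card_lt_card_filter_add_card_image (g := f)
    (s := G.neighborFinset v) (by rw [card_neighborFinset_eq_degree]; omega)
  rw [hrep, card_neighborFinset_eq_degree] at this
  omega

end SimpleGraph

/-- In a (p+2)-star coloured 2p-regular graph (p ≥ 2), the colouring is a fall
colouring: every vertex sees every other colour on a neighbour. -/
theorem stmt6 {V : Type*} [Fintype V] (G : SimpleGraph V) (p : ℕ) (hp : 2 ≤ p)
    (hreg : ∀ v : V, (G.neighborSet v).ncard = 2 * p)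
    (f : V → Fin (p + 2)) (hf : IsStarColoring G f) :
    ∀ v : V, ∀ c : Fin (p + 2), c ≠ f v → ∃ u : V, G.Adj v u ∧ f u = c := by
  classical
  intro v₀ c hc
  by_contra! hmiss
  have hdeg : ∀ v, G.degree v = 2 * p := fun v => by
    rw [← hreg v, ← G.card_neighborSet_eq_degree, Set.ncard_eq_toFinset_card',
      Set.toFinset_card]
  set r := fun v => #(univ.filter (G.RepeatsColor f v))
  have hlow : ∀ v, p ≤ r v := fun v => by
    have hC : #(univ.erase (f v)) = p + 1 := by simp
    have := hdeg v
    have := SimpleGraph.degree_lt_card_repeatsColor_add_card (C := univ.erase (f v))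
      (fun u h => mem_erase.mpr ⟨(hf.1 h).symm, mem_univ _⟩) (by omega)
    simp only [r]
    omega
  have hlow₀ : p + 1 ≤ r v₀ := by
    have hC : #((univ.erase (f v₀)).erase c) = p := by
      simp [card_erase_of_mem (mem_erase.mpr ⟨hc, mem_univ _⟩)]
    have := hdeg v₀
    have := SimpleGraph.degree_lt_card_repeatsColor_add_card (C := (univ.erase (f v₀)).erase c)
      (fun u h => mem_erase.mpr ⟨hmiss u h, mem_erase.mpr ⟨(hf.1 h).symm, mem_univ _⟩⟩)
      (by omega)
    simp only [r]
    omega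
  have hup : 2 * ∑ v, r v ≤ ∑ v, G.degree v :=
    G.two_mul_sum_card_filter_le_sum_degree _ (fun _ _ h => h.1)
      fun _ _ h h' => hf.not_repeatsColor_and_repeatsColor ⟨h, h'⟩
  have hlt : ∑ _v : V, p < ∑ v, r v :=
    sum_lt_sum (fun v _ => hlow v) ⟨v₀, mem_univ _, hlow₀⟩
  simp only [hdeg, sum_const, card_univ, smul_eq_mul] at hup hlt
  linarith
end

section
/- Let p ≥ 2 and let G be a 2p-regular graph with a (p+2)-star colouring f. Then every vertex v of G, say with colour i, has exactly p neighbours in some single colour class V_j and exactly one neighbour in every other colour class V_k with k ∉ {i, j}. -/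
/-!
Call a neighbour `u` of `v` heavy if at least two neighbours of `v` share the colour of `u`.
If `u` is heavy for `v` and `v` is heavy for `u`, the edge `vu` extends on both sides to a
bicoloured path on four vertices; so the heavy arcs form an orientation of part of the edge set
and there are at most `|E| = p |V|` of them. On the other hand, at a vertex `v` the light
neighbours have pairwise distinct colours, avoiding the colour of `v` and at least one heavy
colour (the `2p` neighbours cannot be spread over `p + 1` colours one per colour), so at most `p`
of them are light and at least `p` heavy. Hence every vertex has exactly `p` heavy neighbours,
and the counting at `v` becomes tight: a single heavy colour, carrying `p` neighbours, and one
neighbour of each of the `p` remaining colours.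
-/

open Finset

section HeavyColours

variable {ι : Type*} [Fintype ι] [DecidableEq ι] (d : ι → ℕ) {p : ℕ}

lemma sum_filter_not_two_le_add_card_filter_two_le_add_card_le {Z : Finset ι}
    (hZ : ∀ z ∈ Z, d z = 0) :
    ∑ j with ¬ 2 ≤ d j, d j + #{j | 2 ≤ d j} + #Z ≤ Fintype.card ι := by
  set L := univ.filter (fun j => ¬ 2 ≤ d j)
  have hZL : Z ⊆ L := fun z hz => by simp [L, hZ z hz]
  have hsum : ∑ j ∈ L, d j ≤ #(L \ Z) := by
    rw [← sum_sdiff hZL, sum_eq_zero hZ, add_zero]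
    simpa using sum_le_card_nsmul (L \ Z) d 1 (fun j hj => by
      have := (mem_filter.mp (mem_sdiff.mp hj).1).2; omega)
  have hcard : #(univ.filter fun j => 2 ≤ d j) + #L = Fintype.card ι :=
    card_filter_add_card_filter_not _
  have := card_sdiff_add_card_eq_card hZL
  omega

variable {c : ι}

lemma le_sum_filter_two_le (hp : 2 ≤ p) (hcard : Fintype.card ι = p + 2) (hc : d c = 0)
    (hsum : ∑ j, d j = 2 * p) : p ≤ ∑ j with 2 ≤ d j, d j := by
  have hsplit := sum_filter_add_sum_filter_not univ (fun j => 2 ≤ d j) d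
  have hle := sum_filter_not_two_le_add_card_filter_two_le_add_card_le d
    (Z := {c}) (by simpa using hc)
  have hne : (univ.filter fun j => 2 ≤ d j).Nonempty := by
    by_contra hempty
    rw [not_nonempty_iff_eq_empty] at hempty
    simp only [hempty, sum_empty, card_empty, card_singleton] at hsplit hle
    omega
  have := hne.card_pos
  rw [card_singleton] at hle
  omega

lemma exists_eq_of_sum_filter_two_le_eq (hp : 0 < p) (hcard : Fintype.card ι = p + 2)
    (hc : d c = 0) (hsum : ∑ j, d j = 2 * p) (hheavy : ∑ j with 2 ≤ d j, d j = p) :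
    ∃ j ≠ c, d j = p ∧ ∀ k ≠ c, k ≠ j → d k = 1 := by
  have hsplit := sum_filter_add_sum_filter_not univ (fun j => 2 ≤ d j) d
  obtain ⟨j, hj⟩ : ∃ j, univ.filter (fun j => 2 ≤ d j) = {j} := by
    have hle := sum_filter_not_two_le_add_card_filter_two_le_add_card_le d
      (Z := {c}) (by simpa using hc)
    have hne : (univ.filter fun j => 2 ≤ d j).Nonempty := by
      by_contra hempty
      rw [not_nonempty_iff_eq_empty] at hempty
      simp only [hempty, sum_empty] at hheavy
      omega
    have := hne.card_pos
    rw [card_singleton] at hle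
    exact card_eq_one.mp (by omega)
  have hjH : j ∈ univ.filter (fun j => 2 ≤ d j) := by rw [hj]; exact mem_singleton_self j
  have hdj : 2 ≤ d j := (mem_filter.mp hjH).2
  rw [hj, sum_singleton] at hheavy
  refine ⟨j, fun hjc => by rw [hjc] at hdj; omega, hheavy, fun k hkc hkj => ?_⟩
  have hk : ¬ 2 ≤ d k := fun h => hkj <| mem_singleton.mp <| hj ▸ mem_filter.mpr ⟨mem_univ k, h⟩
  by_contra hk1
  have hle := sum_filter_not_two_le_add_card_filter_two_le_add_card_le d
    (Z := {c, k}) (by simp only [mem_insert, mem_singleton]; rintro z (rfl | rfl) <;> omega)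
  rw [hj, card_singleton, card_pair hkc.symm] at hle
  rw [hj, sum_singleton] at hsplit
  omega

end HeavyColours

namespace SimpleGraph

variable {V α : Type*} [Fintype V]

lemma sum_card_filter_le_card_edgeFinset (G : SimpleGraph V) [DecidableRel G.Adj]
    (R : V → V → Prop) [DecidableRel R]
    (hRG : ∀ ⦃v u⦄, R v u → G.Adj v u) (hR : ∀ ⦃v u⦄, R v u → ¬ R u v) :
    ∑ v, #{u | R v u} ≤ #G.edgeFinset := by
  rw [← card_sigma]
  refine card_le_card_of_injOn (fun q => s(q.1, q.2)) (fun q hq => ?_) ?_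
  · simpa using hRG (mem_filter.mp (mem_sigma.mp hq).2).2
  · rintro ⟨v, u⟩ hq ⟨v', u'⟩ hq' h
    simp only [mem_coe, mem_sigma, mem_filter, mem_univ, true_and, Sym2.eq, Sym2.rel_iff']
      at hq hq' h
    rcases h with ⟨rfl, rfl⟩ | ⟨rfl, rfl⟩
    · rfl
    · exact (hR hq hq').elim

lemma IsRegularOfDegree.card_filter_eq_of_asymm {G : SimpleGraph V} [DecidableRel G.Adj]
    {p : ℕ} (hG : G.IsRegularOfDegree (2 * p)) (R : V → V → Prop) [DecidableRel R]
    (hRG : ∀ ⦃v u⦄, R v u → G.Adj v u) (hR : ∀ ⦃v u⦄, R v u → ¬ R u v)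
    (hle : ∀ v, p ≤ #{u | R v u}) (v : V) : #{u | R v u} = p := by
  have hedges : 2 * #G.edgeFinset = 2 * (Fintype.card V * p) := by
    rw [← sum_degrees_eq_twice_card_edges, sum_congr rfl fun v _ => hG.degree_eq v]
    simp [mul_left_comm]
  have hsum : ∑ v, #{u | R v u} = ∑ _v : V, p := by
    refine le_antisymm ?_ (sum_le_sum fun v _ => hle v)
    calc ∑ v, #{u | R v u} ≤ #G.edgeFinset := G.sum_card_filter_le_card_edgeFinset R hRG hR
      _ = ∑ _v : V, p := by simp; omega
  exact ((sum_eq_sum_iff_of_le fun v _ => hle v).mp hsum.symm v (mem_univ v)).symm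

section ColourDegree

variable (G : SimpleGraph V) [DecidableRel G.Adj] [DecidableEq α] (f : V → α)

def colourDegree (v : V) (j : α) : ℕ := #{u | G.Adj v u ∧ f u = j}

lemma ncard_setOf_adj_and_eq (v : V) (j : α) :
    {u | G.Adj v u ∧ f u = j}.ncard = G.colourDegree f v j := by
  rw [colourDegree, ← Set.ncard_coe_finset, coe_filter]
  simp

lemma card_filter_adj_eq_sum_colourDegree [Fintype α] (v : V) (P : α → Prop)
    [DecidablePred P] : #{u | G.Adj v u ∧ P (f u)} = ∑ j with P j, G.colourDegree f v j := by
  rw [card_eq_sum_card_fiberwise fun u hu => mem_filter.mpr ⟨mem_univ _, (mem_filter.mp hu).2.2⟩]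
  refine sum_congr rfl fun j hj => ?_
  rw [colourDegree, filter_filter]
  refine congrArg card (filter_congr fun u _ => ?_)
  exact ⟨fun h => ⟨h.1.1, h.2⟩, fun h => ⟨⟨h.1, h.2 ▸ (mem_filter.mp hj).2⟩, h.2⟩⟩

lemma sum_colourDegree [Fintype α] (v : V) : ∑ j, G.colourDegree f v j = G.degree v := by
  simpa [← card_neighborFinset_eq_degree, neighborFinset_eq_filter] using
    (G.card_filter_adj_eq_sum_colourDegree f v fun _ => True).symm

end ColourDegree

end SimpleGraph

open SimpleGraph

namespace IsStarColoring

variable {V α : Type*} [Fintype V] [DecidableEq α] {G : SimpleGraph V} [DecidableRel G.Adj]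
  {f : V → α}

lemma colourDegree_self (hf : IsStarColoring G f) (v : V) : G.colourDegree f v (f v) = 0 :=
  card_eq_zero.mpr <| filter_eq_empty_iff.mpr fun _ _ h => hf.1 h.1 h.2.symm

lemma not_two_le_colourDegree (hf : IsStarColoring G f) {v u : V} (hvu : G.Adj v u)
    (hv : 2 ≤ G.colourDegree f v (f u)) : ¬ 2 ≤ G.colourDegree f u (f v) := by
  intro hu
  obtain ⟨v', hv', hv'u⟩ := exists_mem_ne hv u
  obtain ⟨u', hu', hu'v⟩ := exists_mem_ne hu v
  simp only [mem_filter, mem_univ, true_and] at hv' hu'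
  refine hf.2 hv'.1.symm hvu hu'.1 hv'u (fun h => hf.1 hvu ?_) hu'v.symm ⟨hv'.2, hu'.2.symm⟩
  rw [← hv'.2, h, hu'.2]

end IsStarColoring

/-- In a (p+2)-star coloured 2p-regular graph (p ≥ 2), every vertex has exactly
p neighbours in one colour class and exactly one neighbour in each other class. -/
theorem stmt7 {V : Type*} [Fintype V] (G : SimpleGraph V) (p : ℕ) (hp : 2 ≤ p)
    (hreg : ∀ v : V, (G.neighborSet v).ncard = 2 * p)
    (f : V → Fin (p + 2)) (hf : IsStarColoring G f) :
    ∀ v : V, ∃ j : Fin (p + 2), j ≠ f v ∧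
      {u : V | G.Adj v u ∧ f u = j}.ncard = p ∧
      ∀ k : Fin (p + 2), k ≠ f v → k ≠ j →
        {u : V | G.Adj v u ∧ f u = k}.ncard = 1 := by
  classical
  have hG : G.IsRegularOfDegree (2 * p) := fun v => by
    rw [← hreg v, ← card_neighborFinset_eq_degree, Set.ncard_eq_toFinset_card']
    rfl
  have hsum (v : V) : ∑ j, G.colourDegree f v j = 2 * p := by
    rw [sum_colourDegree, hG.degree_eq]
  have hheavy (v : V) : #{u | G.Adj v u ∧ 2 ≤ G.colourDegree f v (f u)}
      = ∑ j with 2 ≤ G.colourDegree f v j, G.colourDegree f v j :=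
    G.card_filter_adj_eq_sum_colourDegree f v (2 ≤ G.colourDegree f v ·)
  have hheavy_eq := hG.card_filter_eq_of_asymm _ (fun _ _ h => h.1)
    (fun _ _ h h' => hf.not_two_le_colourDegree h.1 h.2 h'.2)
    fun v => hheavy v ▸ le_sum_filter_two_le _ hp (by simp) (hf.colourDegree_self v) (hsum v)
  intro v
  obtain ⟨j, hjv, hjp, hone⟩ := exists_eq_of_sum_filter_two_le_eq _ (by omega) (by simp)
    (hf.colourDegree_self v) (hsum v) ((hheavy v).symm.trans (hheavy_eq v))
  refine ⟨j, hjv, ?_, fun k hkv hkj => ?_⟩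
  · rwa [ncard_setOf_adj_and_eq]
  · rw [ncard_setOf_adj_and_eq]
    exact hone k hkv hkj
end

section
/- Let G be a d-regular hypercube graph Q_d with d ≥ 3. Then χ_s(Q_d) ≥ ⌈(d+5)/2⌉. -/
/-- The d-dimensional hypercube graph. -/
def hypercube (d : ℕ) : SimpleGraph (Fin d → Bool) :=
  SimpleGraph.fromRel fun x y => (Finset.univ.filter fun i => x i ≠ y i).card = 1

/-!
Call a neighbour `u` of `x` *repeated* if another neighbour of `x` has the colour of `u`, and
*unique* otherwise. In a star colouring, if `x` is a repeated neighbour of `v`, then `v` is a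
unique neighbour of `x`, since otherwise the edge `xv` would be the middle of a bicoloured path on
four vertices. Double counting thus gives `∑ #repeated ≤ ∑ #unique`. With at most `(d + 4) / 2`
colours, properness forces `#unique ≤ d / 2 ≤ #repeated` at every vertex, so equality holds
everywhere: every vertex has `d / 2` repeated neighbours, all of one colour, and every edge is
repeated at exactly one end.

The directions `D x` towards the repeated neighbours then satisfy `D (x + e_j) = (D x)ᶜ`, so `D` is
constant on each parity class. On a class the colour only depends on the coordinates in `D`, and
the two classes use disjoint sets of colours. The neighbourhood of a vertex already sees
`d / 2 + 1` colours, so `d + 2` colours would be needed, which is a contradiction.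
-/

open Finset SimpleGraph

namespace SimpleGraph

variable {V α : Type*} {G : SimpleGraph V} [Fintype V] [DecidableRel G.Adj] [DecidableEq α]
  {f : V → α}

lemma card_image_neighborFinset_lt [Fintype α] (hproper : ∀ ⦃u v⦄, G.Adj u v → f u ≠ f v)
    (x : V) : #((G.neighborFinset x).image f) < Fintype.card α :=
  card_lt_univ_of_notMem fun h => by
    obtain ⟨u, hu, hfu⟩ := mem_image.1 h
    exact hproper ((mem_neighborFinset ..).1 hu) hfu.symm

variable [DecidableEq V]

variable (G f) in
def repeatColorNeighbors (x : V) : Finset V :=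
  {u ∈ G.neighborFinset x | ∃ w ∈ G.neighborFinset x, w ≠ u ∧ f w = f u}

variable (G f) in
def uniqueColorNeighbors (x : V) : Finset V :=
  {u ∈ G.neighborFinset x | ¬∃ w ∈ G.neighborFinset x, w ≠ u ∧ f w = f u}

lemma repeatColorNeighbors_union_uniqueColorNeighbors (x : V) :
    G.repeatColorNeighbors f x ∪ G.uniqueColorNeighbors f x = G.neighborFinset x :=
  filter_union_filter_not_eq _ _

lemma mem_uniqueColorNeighbors_iff {x v : V} (h : G.Adj x v) :
    v ∈ G.uniqueColorNeighbors f x ↔ v ∉ G.repeatColorNeighbors f x := by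
  simp [uniqueColorNeighbors, repeatColorNeighbors, h]

lemma card_repeatColorNeighbors_add_card_uniqueColorNeighbors (x : V) :
    #(G.repeatColorNeighbors f x) + #(G.uniqueColorNeighbors f x) = G.degree x :=
  card_filter_add_card_filter_not _

lemma card_image_neighborFinset (x : V) :
    #((G.neighborFinset x).image f) =
      #((G.repeatColorNeighbors f x).image f) + #(G.uniqueColorNeighbors f x) := by
  have hinj : Set.InjOn f (G.uniqueColorNeighbors f x) := by
    intro u hu w hw huw
    by_contra hne
    exact (mem_filter.1 hu).2 ⟨w, (mem_filter.1 hw).1, Ne.symm hne, huw.symm⟩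
  have hdisj : Disjoint ((G.repeatColorNeighbors f x).image f)
      ((G.uniqueColorNeighbors f x).image f) := by
    simp only [Finset.disjoint_left, mem_image]
    rintro _ ⟨w, hw, rfl⟩ ⟨u, hu, hfu⟩
    simp only [uniqueColorNeighbors, repeatColorNeighbors, mem_filter] at hu hw
    refine hu.2 ⟨w, hw.1, ?_, hfu.symm⟩
    rintro rfl
    exact hu.2 hw.2
  rw [← repeatColorNeighbors_union_uniqueColorNeighbors (f := f), image_union,
    card_union_of_disjoint hdisj, card_image_of_injOn hinj]

lemma sum_card_repeatColorNeighbors :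
    ∑ x, #(G.repeatColorNeighbors f x) = ∑ v, #{x : V | v ∈ G.repeatColorNeighbors f x} := by
  simpa [bipartiteAbove, bipartiteBelow, filter_mem_eq_inter] using
    sum_card_bipartiteAbove_eq_sum_card_bipartiteBelow (s := univ) (t := univ)
      (fun x v => v ∈ G.repeatColorNeighbors f x)

lemma _root_.IsStarColoring.mem_uniqueColorNeighbors (hf : IsStarColoring G f) {x v : V}
    (h : x ∈ G.repeatColorNeighbors f v) : v ∈ G.uniqueColorNeighbors f x := by
  obtain ⟨hvx, w, hvw, hwx, hfw⟩ := mem_filter.1 h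
  rw [mem_neighborFinset] at hvx hvw
  refine mem_filter.2 ⟨(mem_neighborFinset ..).2 hvx.symm, ?_⟩
  rintro ⟨y, hxy, hyv, hfy⟩
  rw [mem_neighborFinset] at hxy
  have hyw : y ≠ w := by
    rintro rfl
    exact hf.1 hxy hfw.symm
  exact hf.2 hxy.symm hvx.symm hvw hyv hyw hwx.symm ⟨hfy, hfw.symm⟩

lemma _root_.IsStarColoring.filter_mem_repeatColorNeighbors_subset (hf : IsStarColoring G f)
    (v : V) : ({x | v ∈ G.repeatColorNeighbors f x} : Finset V) ⊆ G.uniqueColorNeighbors f v :=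
  fun _ hx => hf.mem_uniqueColorNeighbors (mem_filter.1 hx).2

lemma _root_.IsStarColoring.card_uniqueColorNeighbors_eq (hf : IsStarColoring G f)
    (hle : ∀ x, #(G.uniqueColorNeighbors f x) ≤ #(G.repeatColorNeighbors f x)) (x : V) :
    #(G.uniqueColorNeighbors f x) = #(G.repeatColorNeighbors f x) := by
  have hsum : ∑ x, #(G.repeatColorNeighbors f x) ≤ ∑ x, #(G.uniqueColorNeighbors f x) := by
    rw [sum_card_repeatColorNeighbors]
    exact sum_le_sum fun v _ => card_le_card (hf.filter_mem_repeatColorNeighbors_subset v)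
  exact (sum_eq_sum_iff_of_le fun x _ => hle x).1 (le_antisymm (sum_le_sum fun x _ => hle x) hsum)
    x (mem_univ x)

lemma _root_.IsStarColoring.mem_repeatColorNeighbors_iff (hf : IsStarColoring G f)
    (hle : ∀ x, #(G.uniqueColorNeighbors f x) ≤ #(G.repeatColorNeighbors f x)) {x v : V}
    (hxv : G.Adj x v) : v ∈ G.repeatColorNeighbors f x ↔ x ∉ G.repeatColorNeighbors f v := by
  have hsub := hf.filter_mem_repeatColorNeighbors_subset
  have hsum : ∑ v, #(G.uniqueColorNeighbors f v) ≤
      ∑ v, #{x : V | v ∈ G.repeatColorNeighbors f x} := by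
    rw [← sum_card_repeatColorNeighbors]
    exact sum_le_sum fun v _ => (hf.card_uniqueColorNeighbors_eq hle v).le
  have hcard := (sum_eq_sum_iff_of_le fun v _ => card_le_card (hsub v)).1
    (le_antisymm (sum_le_sum fun v _ => card_le_card (hsub v)) hsum) v (mem_univ v)
  have hin := eq_of_subset_of_card_le (hsub v) hcard.ge
  rw [← mem_uniqueColorNeighbors_iff hxv.symm, ← hin, mem_filter, and_iff_right (mem_univ x)]

end SimpleGraph

namespace Hypercube

variable {d : ℕ}

def toggle (i : Fin d) (x : Fin d → Bool) : Fin d → Bool := Function.update x i (!x i)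

@[simp] lemma toggle_apply_self (i : Fin d) (x : Fin d → Bool) : toggle i x i = !x i := by
  simp [toggle]

lemma toggle_apply_of_ne {i j : Fin d} (h : j ≠ i) (x : Fin d → Bool) : toggle i x j = x j :=
  Function.update_of_ne h _ _

@[simp] lemma toggle_toggle (i : Fin d) (x : Fin d → Bool) : toggle i (toggle i x) = x := by
  simp [toggle]

lemma toggle_comm (i j : Fin d) (x : Fin d → Bool) :
    toggle i (toggle j x) = toggle j (toggle i x) := by
  by_cases h : i = j
  · rw [h]
  · ext m
    by_cases hi : m = i <;> by_cases hj : m = j <;> simp_all [toggle_apply_of_ne]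

lemma toggle_left_injective (x : Fin d → Bool) : Function.Injective (toggle · x) := by
  intro i j h
  by_contra hij
  simpa [toggle_apply_of_ne hij] using congrFun h i

lemma hammingDist_toggle_add_one {i : Fin d} {x y : Fin d → Bool} (h : x i ≠ y i) :
    hammingDist (toggle i x) y + 1 = hammingDist x y := by
  have : ({j | toggle i x j ≠ y j} : Finset (Fin d)) = ({j | x j ≠ y j} : Finset _).erase i := by
    ext j
    by_cases hj : j = i
    · subst hj
      cases hx : x j <;> cases hy : y j <;> simp_all
    · simp [hj, toggle_apply_of_ne hj]
  rw [hammingDist, hammingDist, this, card_erase_add_one (by simpa using h)]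

lemma hammingDist_toggle (i : Fin d) (x : Fin d → Bool) : hammingDist x (toggle i x) = 1 := by
  simpa using (hammingDist_toggle_add_one (i := i) (x := x) (y := toggle i x) (by simp)).symm

lemma adj_iff_hammingDist {x y : Fin d → Bool} :
    (hypercube d).Adj x y ↔ hammingDist x y = 1 := by
  rw [hypercube, fromRel_adj, ← hammingDist, ← hammingDist, hammingDist_comm y x, or_self,
    and_iff_right_iff_imp, ← hammingDist_ne_zero]
  omega

instance : DecidableRel (hypercube d).Adj := fun _ _ => decidable_of_iff' _ adj_iff_hammingDist

lemma adj_iff_exists_toggle {x y : Fin d → Bool} :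
    (hypercube d).Adj x y ↔ ∃ i, toggle i x = y := by
  refine ⟨fun h => ?_, fun ⟨i, hi⟩ => hi ▸ adj_iff_hammingDist.2 (hammingDist_toggle i x)⟩
  obtain ⟨i, hi⟩ := card_eq_one.1 (adj_iff_hammingDist.1 h)
  have hdiff (j : Fin d) : x j ≠ y j ↔ j = i := by
    simpa using congrArg (j ∈ ·) hi
  refine ⟨i, funext fun j => ?_⟩
  by_cases hj : j = i
  · subst hj
    have := (hdiff j).2 rfl
    cases hx : x j <;> simp_all
  · rw [toggle_apply_of_ne hj]
    simpa [hj] using hdiff j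

lemma adj_toggle (i : Fin d) (x : Fin d → Bool) : (hypercube d).Adj x (toggle i x) :=
  adj_iff_exists_toggle.2 ⟨i, rfl⟩

lemma neighborFinset_eq (x : Fin d → Bool) :
    (hypercube d).neighborFinset x = univ.image (toggle · x) := by
  ext y
  simp [adj_iff_exists_toggle]

lemma degree_eq (x : Fin d → Bool) : (hypercube d).degree x = d := by
  rw [← card_neighborFinset_eq_degree, neighborFinset_eq,
    card_image_of_injective _ (toggle_left_injective x), card_univ, Fintype.card_fin]

def parity (x : Fin d → Bool) : ZMod 2 := ∑ i, ((x i).toNat : ZMod 2)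

lemma parity_toggle (i : Fin d) (x : Fin d → Bool) : parity (toggle i x) = parity x + 1 := by
  unfold parity
  rw [← add_sum_erase _ _ (mem_univ i), ← add_sum_erase _ _ (mem_univ i),
    sum_congr rfl fun j hj => by rw [toggle_apply_of_ne (ne_of_mem_erase hj)]]
  have hbit : ∀ b : Bool, ((!b).toNat : ZMod 2) = b.toNat + 1 := by decide
  rw [toggle_apply_self, hbit, add_right_comm]

lemma parity_toggle_eq_iff {i : Fin d} {x y : Fin d → Bool} :
    parity (toggle i y) = parity x ↔ parity y ≠ parity x := by
  rw [parity_toggle]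
  generalize parity y = a
  generalize parity x = b
  revert a b
  decide

lemma induction_on_agree {S : Finset (Fin d)} {P : (Fin d → Bool) → Prop} {x : Fin d → Bool}
    (hx : P x) (hstep : ∀ y, ∀ i ∉ S, P y → P (toggle i y)) {y : Fin d → Bool}
    (hy : ∀ i ∈ S, y i = x i) : P y := by
  induction hn : hammingDist y x generalizing y with
  | zero => rwa [hammingDist_eq_zero.1 hn]
  | succ n ih =>
    obtain ⟨i, hi⟩ : ∃ i, y i ≠ x i := by
      by_contra! h
      simp [funext h] at hn
    have hiS : i ∉ S := fun h => hi (hy i h)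
    have := hstep _ i hiS (ih (y := toggle i y) (fun j hj => ?_) ?_)
    · rwa [toggle_toggle] at this
    · rw [toggle_apply_of_ne (ne_of_mem_of_not_mem hj hiS), hy j hj]
    · have := hammingDist_toggle_add_one hi
      omega

variable {α : Type*} [DecidableEq α] {f : (Fin d → Bool) → α}

/-- The shape that the counting argument forces on a star colouring of `Q_d` with at most
`(d + 4) / 2` colours. -/
structure IsTight (f : (Fin d → Bool) → α) : Prop where
  two_mul_card : ∀ x, 2 * #((hypercube d).repeatColorNeighbors f x) = d
  color_eq : ∀ x, ∀ u ∈ (hypercube d).repeatColorNeighbors f x,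
    ∀ w ∈ (hypercube d).repeatColorNeighbors f x, f u = f w
  mem_repeat_iff : ∀ ⦃x v⦄, (hypercube d).Adj x v →
    (v ∈ (hypercube d).repeatColorNeighbors f x ↔ x ∉ (hypercube d).repeatColorNeighbors f v)

variable (f) in
def repeatDirs (x : Fin d → Bool) : Finset (Fin d) :=
  {j | toggle j x ∈ (hypercube d).repeatColorNeighbors f x}

lemma mem_repeatDirs {x : Fin d → Bool} {j : Fin d} :
    j ∈ repeatDirs f x ↔ toggle j x ∈ (hypercube d).repeatColorNeighbors f x := by
  simp [repeatDirs]

lemma card_repeatDirs (x : Fin d → Bool) :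
    #(repeatDirs f x) = #((hypercube d).repeatColorNeighbors f x) := by
  have : (repeatDirs f x).image (toggle · x) = (hypercube d).repeatColorNeighbors f x := by
    ext u
    simp only [mem_image, mem_repeatDirs]
    refine ⟨fun ⟨j, hj, hu⟩ => hu ▸ hj, fun hu => ?_⟩
    obtain ⟨j, -, rfl⟩ := mem_image.1 (neighborFinset_eq x ▸ (mem_filter.1 hu).1)
    exact ⟨j, hu, rfl⟩
  rw [← this, card_image_of_injective _ (toggle_left_injective x)]

lemma IsTight.mem_repeat_toggle (ht : IsTight f) {x : Fin d → Bool} {j : Fin d}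
    (hj : j ∉ repeatDirs f x) : x ∈ (hypercube d).repeatColorNeighbors f (toggle j x) :=
  not_not.1 (mt (ht.mem_repeat_iff (adj_toggle j x)).2 (mem_repeatDirs.not.1 hj))

lemma IsTight.repeatDirs_toggle_of_mem (ht : IsTight f) {x : Fin d → Bool} {j : Fin d}
    (hj : j ∈ repeatDirs f x) : repeatDirs f (toggle j x) = (repeatDirs f x)ᶜ := by
  refine eq_of_subset_of_card_le (fun i hi => mem_compl.2 fun hix => ?_) ?_
  · rw [mem_repeatDirs] at hi hix hj
    by_cases hij : i = j
    · subst hij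
      rw [toggle_toggle] at hi
      exact (ht.mem_repeat_iff (adj_toggle i x)).1 hj hi
    · -- `toggle j x` and `toggle i x` share a colour and the neighbour `toggle i (toggle j x)`
      have hq : toggle j x ∈ (hypercube d).repeatColorNeighbors f (toggle i (toggle j x)) := by
        refine mem_filter.2 ⟨(mem_neighborFinset _ _ _).2 (adj_toggle i _).symm, toggle i x, ?_,
          (toggle_left_injective x).ne hij, ht.color_eq x _ hix _ hj⟩
        rw [mem_neighborFinset, toggle_comm]
        exact (adj_toggle j _).symm
      exact (ht.mem_repeat_iff (adj_toggle i _)).1 hi hq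
  · have := ht.two_mul_card x
    have := ht.two_mul_card (toggle j x)
    rw [card_compl, card_repeatDirs, card_repeatDirs, Fintype.card_fin]
    omega

lemma IsTight.repeatDirs_toggle (ht : IsTight f) (j : Fin d) (x : Fin d → Bool) :
    repeatDirs f (toggle j x) = (repeatDirs f x)ᶜ := by
  by_cases hj : j ∈ repeatDirs f x
  · exact ht.repeatDirs_toggle_of_mem hj
  · have h := ht.repeatDirs_toggle_of_mem (x := toggle j x) (j := j)
      (by rw [mem_repeatDirs, toggle_toggle]; exact ht.mem_repeat_toggle hj)
    rw [toggle_toggle] at h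
    rw [h, compl_compl]

lemma IsTight.repeatDirs_eq (ht : IsTight f) (x y : Fin d → Bool) :
    repeatDirs f y = if parity y = parity x then repeatDirs f x else (repeatDirs f x)ᶜ := by
  refine induction_on_agree (S := ∅) (x := x)
    (P := fun y => repeatDirs f y = if parity y = parity x then repeatDirs f x
      else (repeatDirs f x)ᶜ)
    (by simp) (fun y i _ hy => ?_) (by simp)
  rw [ht.repeatDirs_toggle, hy]
  by_cases h : parity y = parity x <;> simp [h, parity_toggle_eq_iff]

lemma IsTight.color_eq_of_agree (ht : IsTight f) {x y : Fin d → Bool}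
    (hpar : parity y = parity x) (hy : ∀ i ∈ repeatDirs f x, y i = x i) : f y = f x := by
  -- On the other parity class, `f x` is the colour one step away in every direction outside
  -- `repeatDirs f x`.
  suffices key : if parity y = parity x then f y = f x
      else ∀ l ∉ repeatDirs f x, f (toggle l y) = f x by
    rwa [if_pos hpar] at key
  refine induction_on_agree (S := repeatDirs f x) (x := x)
    (P := fun y => if parity y = parity x then f y = f x
      else ∀ l ∉ repeatDirs f x, f (toggle l y) = f x)
    (by rw [if_pos rfl]) (fun y i hi hy => ?_) hy
  by_cases h : parity y = parity x
  · have hdy : repeatDirs f y = repeatDirs f x := by rw [ht.repeatDirs_eq x y, if_pos h]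
    simp only [parity_toggle_eq_iff, h, ne_eq, not_true_eq_false, if_false]
    intro l hl
    have hy' : y ∈ (hypercube d).repeatColorNeighbors f (toggle i y) :=
      ht.mem_repeat_toggle (by rwa [hdy])
    have hl' : toggle l (toggle i y) ∈ (hypercube d).repeatColorNeighbors f (toggle i y) := by
      rw [← mem_repeatDirs, ht.repeatDirs_toggle, hdy]
      exact mem_compl.2 hl
    rw [ht.color_eq _ _ hl' _ hy']
    simpa [h] using hy
  · simp only [h, if_false] at hy
    simpa [parity_toggle_eq_iff, h] using hy i hi

lemma IsTight.two_mul_card_repeatDirs (ht : IsTight f) (x : Fin d → Bool) :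
    2 * #(repeatDirs f x) = d := by
  rw [card_repeatDirs]
  exact ht.two_mul_card x

lemma IsTight.color_ne_of_parity_ne (ht : IsTight f)
    (hproper : ∀ ⦃u v⦄, (hypercube d).Adj u v → f u ≠ f v) (hd : 0 < d) {u w : Fin d → Bool}
    (h : parity u ≠ parity w) : f u ≠ f w := by
  have hw : repeatDirs f w = (repeatDirs f u)ᶜ := by rw [ht.repeatDirs_eq u w, if_neg (Ne.symm h)]
  have hu := ht.two_mul_card_repeatDirs u
  let z : Fin d → Bool := fun i => if i ∈ repeatDirs f u then u i else w i
  have hzu : ∀ i ∈ repeatDirs f u, z i = u i := fun i hi => if_pos hi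
  have hzw : ∀ i ∈ repeatDirs f w, z i = w i := fun i hi => if_neg (mem_compl.1 (hw ▸ hi))
  obtain hz | hz : parity z = parity u ∨ parity z = parity w := by
    generalize parity z = c
    generalize parity u = a at h
    generalize parity w = b at h
    revert a b c
    decide
  · obtain ⟨j, hj⟩ : (repeatDirs f u).Nonempty := card_pos.1 (by omega)
    have hj' : j ∉ repeatDirs f w := by simpa [hw] using hj
    rw [← ht.color_eq_of_agree hz hzu, ← ht.color_eq_of_agree (x := w) (y := toggle j z)
      (parity_toggle_eq_iff.2 (hz ▸ h)) fun i hi => by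
        rw [toggle_apply_of_ne (ne_of_mem_of_not_mem hi hj'), hzw i hi]]
    exact hproper (adj_toggle j z)
  · obtain ⟨l, hl⟩ : (repeatDirs f w).Nonempty :=
      card_pos.1 (by rw [hw, card_compl, Fintype.card_fin]; omega)
    have hl' : l ∉ repeatDirs f u := by simpa [hw] using hl
    rw [← ht.color_eq_of_agree hz hzw, ← ht.color_eq_of_agree (x := u) (y := toggle l z)
      (parity_toggle_eq_iff.2 (hz ▸ Ne.symm h)) fun i hi => by
        rw [toggle_apply_of_ne (ne_of_mem_of_not_mem hi hl'), hzu i hi]]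
    exact (hproper (adj_toggle l z)).symm

lemma IsTight.le_two_mul_card_image_neighborFinset (ht : IsTight f) (hd : 0 < d)
    (x : Fin d → Bool) : d + 2 ≤ 2 * #(((hypercube d).neighborFinset x).image f) := by
  have hrep := ht.two_mul_card x
  have hsplit :=
    card_repeatColorNeighbors_add_card_uniqueColorNeighbors (G := hypercube d) (f := f) x
  have himage : 0 < #(((hypercube d).repeatColorNeighbors f x).image f) :=
    card_pos.2 (image_nonempty.2 (card_pos.1 (by omega)))
  rw [card_image_neighborFinset, degree_eq] at *
  omega

lemma IsTight.add_two_le_card [Fintype α] (ht : IsTight f)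
    (hproper : ∀ ⦃u v⦄, (hypercube d).Adj u v → f u ≠ f v) (hd : 0 < d) :
    d + 2 ≤ Fintype.card α := by
  let x : Fin d → Bool := fun _ => false
  let y := toggle ⟨0, hd⟩ x
  -- the neighbours of `x` and of `y` lie in different parity classes, so they see disjoint colours
  have hdisj : Disjoint (((hypercube d).neighborFinset x).image f)
      (((hypercube d).neighborFinset y).image f) := by
    simp only [Finset.disjoint_left, mem_image, neighborFinset_eq, mem_univ, true_and]
    rintro _ ⟨_, ⟨i, rfl⟩, rfl⟩ ⟨_, ⟨j, rfl⟩, hj⟩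
    refine ht.color_ne_of_parity_ne hproper hd ?_ hj.symm
    simp only [y, parity_toggle, add_assoc, CharTwo.add_self_eq_zero, add_zero]
    simp
  have := card_le_univ ((((hypercube d).neighborFinset x).image f) ∪
    (((hypercube d).neighborFinset y).image f))
  have := ht.le_two_mul_card_image_neighborFinset hd x
  have := ht.le_two_mul_card_image_neighborFinset hd y
  rw [card_union_of_disjoint hdisj] at *
  omega

lemma _root_.IsStarColoring.isTight [Fintype α] (hf : IsStarColoring (hypercube d) f)
    (hd : 3 ≤ d) (hα : Fintype.card α ≤ (d + 4) / 2) : IsTight f := by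
  have hcount (x : Fin d → Bool) := card_image_neighborFinset_lt hf.1 x
  have hsplit (x : Fin d → Bool) :=
    card_repeatColorNeighbors_add_card_uniqueColorNeighbors (G := hypercube d) (f := f) x
  simp only [card_image_neighborFinset, degree_eq] at hcount hsplit
  have hle (x : Fin d → Bool) : #((hypercube d).uniqueColorNeighbors f x) ≤
      #((hypercube d).repeatColorNeighbors f x) := by
    have := hcount x
    have := hsplit x
    have : 0 < #(((hypercube d).repeatColorNeighbors f x).image f) := by
      refine card_pos.2 (image_nonempty.2 (nonempty_iff_ne_empty.2 fun h => ?_))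
      simp only [h, image_empty, card_empty] at *
      omega
    omega
  have heq := hf.card_uniqueColorNeighbors_eq hle
  refine ⟨fun x => ?_, fun x u hu w hw => ?_,
    fun x v hxv => hf.mem_repeatColorNeighbors_iff hle hxv⟩
  · have := hsplit x
    have := heq x
    omega
  · have := hcount x
    have := hsplit x
    have := heq x
    exact card_le_one.1 (by omega) _ (mem_image_of_mem f hu) _ (mem_image_of_mem f hw)

end Hypercube

/-- For d ≥ 3, the star chromatic number of Q_d is at least ⌈(d+5)/2⌉
(= (d+6)/2 in natural division). -/
theorem stmt9 (d k : ℕ) (hd : 3 ≤ d)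
    (hcol : ∃ f : (Fin d → Bool) → Fin k, IsStarColoring (hypercube d) f) :
    (d + 6) / 2 ≤ k := by
  obtain ⟨f, hf⟩ := hcol
  by_contra! hk
  have ht := hf.isTight hd (by rw [Fintype.card_fin]; omega)
  have := ht.add_two_le_card hf.1 (by omega)
  rw [Fintype.card_fin] at this
  omega
end

section
/- Let p ≥ 2 and let G be a 2p-regular (p+2)-star colourable graph on n vertices. Then the independence number of G satisfies α(G) > n/4. -/
open Finset

section Aux

set_option linter.unusedSectionVars false
variable {V : Type*} [Fintype V] [DecidableEq V] {p : ℕ}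
variable (G : SimpleGraph V) [DecidableRel G.Adj] (f : V → Fin (p + 2))

/-- number of neighbours of v coloured c -/
def dC (v : V) (c : Fin (p + 2)) : ℕ := ((G.neighborFinset v).filter fun u => f u = c).card

variable {G f}

lemma dC_self (hf : IsStarColoring G f) (v : V) : dC G f v (f v) = 0 := by
  simp only [dC, card_eq_zero, filter_eq_empty_iff]
  intro u hu h
  exact hf.1 ((SimpleGraph.mem_neighborFinset G v u).mp hu) h.symm

lemma sum_dC (v : V) : ∑ c, dC G f v c = G.degree v :=
  (Finset.card_eq_sum_card_fiberwise (fun x _ => mem_univ (f x))).symm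

/-- star property: an edge has at most one "center" endpoint -/
lemma not_both (hf : IsStarColoring G f) {v w : V} (h : G.Adj v w) :
    ¬(2 ≤ dC G f v (f w) ∧ 2 ≤ dC G f w (f v)) := by
  rintro ⟨h1, h2⟩
  obtain ⟨u', hu', hne1⟩ := Finset.exists_mem_ne h1 w
  obtain ⟨v', hv', hne2⟩ := Finset.exists_mem_ne h2 v
  simp only [mem_filter, SimpleGraph.mem_neighborFinset] at hu' hv'
  have hcol : f v ≠ f w := hf.1 h
  exact hf.2 hu'.1.symm h hv'.1 hne1
    (fun he => hcol (hv'.2 ▸ he ▸ hu'.2)) (Ne.symm hne2) ⟨hu'.2, hv'.2.symm⟩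

end Aux

section Aux2
set_option linter.unusedSectionVars false
variable {V : Type*} [Fintype V] [DecidableEq V] {p : ℕ}
variable {G : SimpleGraph V} [DecidableRel G.Adj] {f : V → Fin (p + 2)}

/-- number of colours seen exactly once in the neighbourhood -/
def sC (G : SimpleGraph V) [DecidableRel G.Adj] (f : V → Fin (p+2)) (v : V) : ℕ :=
  (univ.filter fun c => dC G f v c = 1).card

def tC (G : SimpleGraph V) [DecidableRel G.Adj] (f : V → Fin (p+2)) (v : V) : ℕ :=
  ∑ c, if 2 ≤ dC G f v c then dC G f v c else 0

lemma sC_add_tC (v : V) : sC G f v + tC G f v = G.degree v := by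
  rw [← sum_dC (f := f), sC, card_filter, tC, ← Finset.sum_add_distrib]
  refine Finset.sum_congr rfl fun c _ => ?_
  split_ifs <;> omega

lemma sC_le (hf : IsStarColoring G f) (hp : 2 ≤ p) {v : V} (hdeg : G.degree v = 2*p) :
    sC G f v ≤ p := by
  classical
  set S := univ.filter fun c => dC G f v c = 1 with hS
  set B := univ.filter fun c => 2 ≤ dC G f v c with hB
  have hsc : sC G f v = S.card := rfl
  have hBpos : 1 ≤ B.card := by
    rcases Finset.eq_empty_or_nonempty B with he | hne
    · exfalso
      have hble : ∀ c, dC G f v c ≤ if c = f v then 0 else 1 := by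
        intro c
        have h2 : ¬ (2 ≤ dC G f v c) := by
          intro h2
          have hcB : c ∈ B := by rw [hB, mem_filter]; exact ⟨mem_univ c, h2⟩
          rw [he] at hcB; exact absurd hcB (Finset.notMem_empty c)
        split_ifs with h
        · rw [h, dC_self hf]
        · omega
      have h1 : (2*p : ℕ) ≤ ∑ c, if c = f v then 0 else 1 := by
        rw [← hdeg, ← sum_dC (f := f)]
        exact Finset.sum_le_sum fun c _ => hble c
      have h2 : (∑ c : Fin (p+2), if c = f v then (0:ℕ) else 1)
          + (∑ c : Fin (p+2), if c = f v then (1:ℕ) else 0) = p + 2 := by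
        rw [← Finset.sum_add_distrib]
        have hpt : ∀ c : Fin (p+2), ((if c = f v then (0:ℕ) else 1) + (if c = f v then (1:ℕ) else 0)) = 1 :=
          fun c => by split_ifs <;> rfl
        rw [Finset.sum_congr rfl fun c _ => hpt c]
        simp
      have h3 : (∑ c : Fin (p+2), if c = f v then (1:ℕ) else 0) = 1 := by
        simp [Finset.sum_ite_eq']
      omega
    · exact hne.card_pos
  have hdisj : Disjoint S B := by
    rw [Finset.disjoint_left]
    intro c hc hc'
    rw [hS, mem_filter] at hc; rw [hB, mem_filter] at hc'
    omega
  have hsub : S ∪ B ⊆ univ.erase (f v) := by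
    intro c hc
    rw [Finset.mem_erase]
    refine ⟨?_, mem_univ c⟩
    rintro rfl
    rcases mem_union.mp hc with h | h <;>
    · rw [mem_filter, dC_self hf] at h
      omega
  have hcard : S.card + B.card ≤ p + 1 := by
    rw [← Finset.card_union_of_disjoint hdisj]
    calc (S ∪ B).card ≤ (univ.erase (f v)).card := Finset.card_le_card hsub
    _ = p + 1 := by rw [Finset.card_erase_of_mem (mem_univ _), card_univ]; simp
  omega

end Aux2

section Aux3
set_option linter.unusedSectionVars false
variable {V : Type*} [Fintype V] [DecidableEq V] {p : ℕ}
variable {G : SimpleGraph V} [DecidableRel G.Adj] {f : V → Fin (p + 2)}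

lemma tC_eq (v : V) :
    ∑ w, (if G.Adj v w then (if 2 ≤ dC G f v (f w) then 1 else 0) else 0) = tC G f v := by
  classical
  have h1 : ∑ w, (if G.Adj v w then (if 2 ≤ dC G f v (f w) then (1:ℕ) else 0) else 0)
      = ∑ w ∈ G.neighborFinset v, (if 2 ≤ dC G f v (f w) then (1:ℕ) else 0) := by
    rw [SimpleGraph.neighborFinset_eq_filter, Finset.sum_filter]
  rw [h1, ← Finset.sum_fiberwise_of_maps_to (t := univ) (fun x _ => mem_univ (f x))]
  refine Finset.sum_congr rfl fun c _ => ?_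
  rw [Finset.sum_congr rfl (fun w hw => by rw [(mem_filter.mp hw).2]),
    Finset.sum_const, smul_eq_mul]
  show (dC G f v c) * _ = _
  split_ifs <;> omega

lemma deg_eq (v : V) : ∑ w, (if G.Adj v w then (1:ℕ) else 0) = G.degree v := by
  rw [← Finset.sum_filter, ← SimpleGraph.neighborFinset_eq_filter,
    Finset.sum_const, smul_eq_mul, mul_one]
  rfl

lemma global (hf : IsStarColoring G f) (hp : 2 ≤ p) (hdeg : ∀ v : V, G.degree v = 2*p) :
    (∀ v, sC G f v = p) ∧
      (∀ ⦃v w : V⦄, G.Adj v w → 2 ≤ dC G f v (f w) ∨ 2 ≤ dC G f w (f v)) := by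
  classical
  set n := Fintype.card V with hn
  set F : V → V → ℕ := fun v w => if 2 ≤ dC G f v (f w) then 1 else 0 with hF
  have hring : 2*p*n = n*p + n*p := by ring
  have hswap : ∑ v, ∑ w, (if G.Adj v w then F v w else 0)
      = ∑ v, ∑ w, (if G.Adj v w then F w v else 0) := by
    rw [Finset.sum_comm]
    exact Finset.sum_congr rfl fun x _ => Finset.sum_congr rfl fun y _ =>
      if_congr (G.adj_comm y x) rfl rfl
  have hT : ∀ v, ∑ w, (if G.Adj v w then F v w else 0) = tC G f v := fun v => tC_eq v
  have hdeg2 : ∑ v : V, ∑ w, (if G.Adj v w then (1:ℕ) else 0) = 2*p*n := by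
    rw [Finset.sum_congr rfl fun v _ => (deg_eq v).trans (hdeg v),
      Finset.sum_const, smul_eq_mul, card_univ, ← hn]
    exact Nat.mul_comm _ _
  have hpair : ∀ v w : V, (if G.Adj v w then F v w + F w v else 0)
      ≤ (if G.Adj v w then (1:ℕ) else 0) := by
    intro v w
    split_ifs with h
    · have hnb := not_both hf h
      show (if 2 ≤ dC G f v (f w) then (1:ℕ) else 0)
        + (if 2 ≤ dC G f w (f v) then (1:ℕ) else 0) ≤ 1
      split_ifs with h1 h2 h2 <;> first | omega | exact absurd ⟨h1, h2⟩ hnb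
    · exact le_refl 0
  have hsplit : ∑ v, ∑ w, (if G.Adj v w then F v w + F w v else 0)
      = (∑ v, tC G f v) + (∑ v, tC G f v) := by
    have hptw : ∀ v w : V, (if G.Adj v w then F v w + F w v else 0)
        = (if G.Adj v w then F v w else 0) + (if G.Adj v w then F w v else 0) := by
      intro v w; split_ifs <;> simp
    rw [Finset.sum_congr rfl fun v (_ : v ∈ univ) =>
      Finset.sum_congr rfl fun w (_ : w ∈ univ) => hptw v w]
    rw [Finset.sum_congr rfl fun v (_ : v ∈ univ) => Finset.sum_add_distrib,
      Finset.sum_add_distrib, ← hswap]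
    rw [Finset.sum_congr rfl fun v (_ : v ∈ univ) => hT v]
  have h2T : (∑ v, tC G f v) + (∑ v, tC G f v) ≤ 2*p*n := by
    rw [← hsplit, ← hdeg2]
    exact Finset.sum_le_sum fun v _ => Finset.sum_le_sum fun w _ => hpair v w
  have hst : (∑ v, sC G f v) + (∑ v, tC G f v) = 2*p*n := by
    rw [← Finset.sum_add_distrib,
      Finset.sum_congr rfl fun v (_ : v ∈ univ) => (sC_add_tC v).trans (hdeg v),
      Finset.sum_const, smul_eq_mul, card_univ, ← hn]
    exact Nat.mul_comm _ _
  have hsle : ∀ v : V, sC G f v ≤ p := fun v => sC_le hf hp (hdeg v)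
  have hsall : ∀ v : V, sC G f v = p := by
    by_contra hc
    push_neg at hc
    obtain ⟨v0, hv0⟩ := hc
    have hlt : ∑ v, sC G f v < ∑ _v : V, p :=
      Finset.sum_lt_sum (fun v _ => hsle v) ⟨v0, mem_univ v0, lt_of_le_of_ne (hsle v0) hv0⟩
    have hsum : ∑ _v : V, p = n * p := by
      rw [Finset.sum_const, smul_eq_mul, card_univ, ← hn]
    omega
  refine ⟨hsall, ?_⟩
  have hssum : ∑ v, sC G f v = n * p := by
    rw [Finset.sum_congr rfl fun v _ => hsall v, Finset.sum_const, smul_eq_mul,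
      card_univ, ← hn]
  have htsum : ∑ v, tC G f v = n * p := by omega
  intro v w hadj
  by_contra hcon
  push_neg at hcon
  obtain ⟨hc1, hc2⟩ := hcon
  have hzero : (if G.Adj v w then F v w + F w v else 0) = 0 := by
    rw [if_pos hadj]
    show (if 2 ≤ dC G f v (f w) then (1:ℕ) else 0)
      + (if 2 ≤ dC G f w (f v) then (1:ℕ) else 0) = 0
    split_ifs <;> omega
  have hone : (if G.Adj v w then (1:ℕ) else 0) = 1 := by rw [if_pos hadj]
  have hlt2 : ∑ x : V × V, (if G.Adj x.1 x.2 then F x.1 x.2 + F x.2 x.1 else 0)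
      < ∑ x : V × V, (if G.Adj x.1 x.2 then (1:ℕ) else 0) := by
    refine Finset.sum_lt_sum (fun x _ => hpair x.1 x.2) ⟨(v, w), mem_univ _, ?_⟩
    show (if G.Adj v w then F v w + F w v else 0) < (if G.Adj v w then (1:ℕ) else 0)
    rw [hzero, hone]
    exact Nat.zero_lt_one
  rw [Fintype.sum_prod_type, Fintype.sum_prod_type, hsplit, hdeg2, htsum] at hlt2
  omega

end Aux3

section Aux4
set_option linter.unusedSectionVars false
variable {V : Type*} [Fintype V] [DecidableEq V] {p : ℕ}
variable {G : SimpleGraph V} [DecidableRel G.Adj] {f : V → Fin (p + 2)}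

lemma structure_lemma (hf : IsStarColoring G f) (hp : 2 ≤ p)
    (hdeg : ∀ v : V, G.degree v = 2*p) (v : V) :
    ∃ mu : Fin (p + 2), mu ≠ f v ∧ dC G f v mu = p ∧
      (∀ c, 2 ≤ dC G f v c → c = mu) ∧
      (∀ c, c ≠ f v → c ≠ mu → dC G f v c = 1) := by
  classical
  have hs : sC G f v = p := (global hf hp hdeg).1 v
  have ht : tC G f v = p := by
    have := sC_add_tC (G := G) (f := f) v
    rw [hdeg v, hs] at this
    omega
  set S := univ.filter fun c => dC G f v c = 1 with hS
  set B := univ.filter fun c => 2 ≤ dC G f v c with hB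
  have hBne : B.Nonempty := by
    rcases Finset.eq_empty_or_nonempty B with he | hne
    · exfalso
      have : tC G f v = 0 := by
        rw [tC]
        refine Finset.sum_eq_zero fun c _ => ?_
        rw [if_neg]
        intro h2
        have hcB : c ∈ B := by rw [hB, mem_filter]; exact ⟨mem_univ c, h2⟩
        rw [he] at hcB; exact absurd hcB (Finset.notMem_empty c)
      omega
    · exact hne
  have hdisj : Disjoint S B := by
    rw [Finset.disjoint_left]
    intro c hc hc'
    rw [hS, mem_filter] at hc; rw [hB, mem_filter] at hc'
    omega
  have hsub : S ∪ B ⊆ univ.erase (f v) := by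
    intro c hc
    rw [Finset.mem_erase]
    refine ⟨?_, mem_univ c⟩
    rintro rfl
    rcases mem_union.mp hc with h | h <;>
    · rw [mem_filter, dC_self hf] at h
      omega
  have hcard : S.card + B.card ≤ p + 1 := by
    rw [← Finset.card_union_of_disjoint hdisj]
    calc (S ∪ B).card ≤ (univ.erase (f v)).card := Finset.card_le_card hsub
    _ = p + 1 := by rw [Finset.card_erase_of_mem (mem_univ _), card_univ]; simp
  have hScard : S.card = p := hs
  have hB1 : B.card = 1 := by
    have := hBne.card_pos; omega
  obtain ⟨mu, hmu⟩ := Finset.card_eq_one.mp hB1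
  have hmuB : mu ∈ B := hmu ▸ Finset.mem_singleton_self mu
  have hmu2 : 2 ≤ dC G f v mu := (mem_filter.mp hmuB).2
  have hmufv : mu ≠ f v := by
    rintro rfl
    rw [dC_self hf] at hmu2; omega
  have hdmu : dC G f v mu = p := by
    have h1 : tC G f v = ∑ c ∈ B, dC G f v c := by
      rw [tC, hB, Finset.sum_filter]
    rw [hmu, Finset.sum_singleton] at h1
    omega
  have honly : ∀ c, 2 ≤ dC G f v c → c = mu := by
    intro c hc
    have : c ∈ B := by rw [hB, mem_filter]; exact ⟨mem_univ c, hc⟩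
    rw [hmu, Finset.mem_singleton] at this
    exact this
  refine ⟨mu, hmufv, hdmu, honly, ?_⟩
  intro c hcf hcmu
  have hSeq : S = (univ.erase (f v)).erase mu := by
    apply Finset.eq_of_subset_of_card_le
    · intro c' hc'
      have h1 := (mem_filter.mp hc').2
      rw [Finset.mem_erase, Finset.mem_erase]
      refine ⟨?_, ?_, mem_univ c'⟩
      · rintro rfl; omega
      · rintro rfl; rw [dC_self hf] at h1; omega
    · rw [Finset.card_erase_of_mem, Finset.card_erase_of_mem (mem_univ _), card_univ]
      · simp [hScard]
      · rw [Finset.mem_erase]; exact ⟨hmufv, mem_univ mu⟩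
  have : c ∈ S := by
    rw [hSeq, Finset.mem_erase, Finset.mem_erase]
    exact ⟨hcmu, hcf, mem_univ c⟩
  exact (mem_filter.mp this).2

end Aux4

section Aux5
set_option linter.unusedSectionVars false
variable {V : Type*} [Fintype V] [DecidableEq V] {p : ℕ}
variable {G : SimpleGraph V} [DecidableRel G.Adj] {f : V → Fin (p + 2)}

lemma dC_as_sum (v : V) (c : Fin (p+2)) :
    dC G f v c = ∑ w, (if G.Adj v w ∧ f w = c then (1:ℕ) else 0) := by
  rw [dC, SimpleGraph.neighborFinset_eq_filter, Finset.filter_filter, Finset.card_filter]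

lemma pair_count (hf : IsStarColoring G f) (hp : 2 ≤ p)
    (hdeg : ∀ v : V, G.degree v = 2*p) (mu : V → Fin (p+2))
    (hdmu : ∀ v, dC G f v (mu v) = p)
    (honly : ∀ v c, 2 ≤ dC G f v c → c = mu v)
    (hone : ∀ v c, c ≠ f v → c ≠ mu v → dC G f v c = 1)
    {i j : Fin (p+2)} (hij : i ≠ j) :
    p * (univ.filter fun v => f v = i ∧ mu v = j).card
      + (univ.filter fun v => f v = j ∧ mu v = i).card
      = (univ.filter fun v => f v = j).card := by
  classical
  set Q := ∑ x : V × V,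
    (if G.Adj x.1 x.2 ∧ f x.1 = i ∧ mu x.1 = j ∧ f x.2 = j then (1:ℕ) else 0) with hQ
  -- count by first coordinate
  have hfst : Q = p * (univ.filter fun v => f v = i ∧ mu v = j).card := by
    rw [hQ, Fintype.sum_prod_type]
    have hinner : ∀ v : V, (∑ w, if G.Adj v w ∧ f v = i ∧ mu v = j ∧ f w = j then (1:ℕ) else 0)
        = (if f v = i ∧ mu v = j then p else 0) := by
      intro v
      split_ifs with h
      · have hd : dC G f v j = p := by rw [← h.2]; exact hdmu v
        have hsum : (∑ w, if G.Adj v w ∧ f v = i ∧ mu v = j ∧ f w = j then (1:ℕ) else 0)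
            = dC G f v j := by
          rw [dC_as_sum]
          exact Finset.sum_congr rfl fun w _ =>
            if_congr ⟨fun hx => ⟨hx.1, hx.2.2.2⟩, fun hx => ⟨hx.1, h.1, h.2, hx.2⟩⟩ rfl rfl
        rw [hsum, hd]
      · refine Finset.sum_eq_zero fun w _ => if_neg fun hx => h ⟨hx.2.1, hx.2.2.1⟩
    rw [Finset.sum_congr rfl fun v _ => hinner v, ← Finset.sum_filter,
      Finset.sum_const, smul_eq_mul, mul_comm]
  -- count by second coordinate
  have hglob := (global hf hp hdeg).2
  have hsnd : Q + (univ.filter fun v => f v = j ∧ mu v = i).card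
      = (univ.filter fun v => f v = j).card := by
    rw [hQ, Fintype.sum_prod_type_right]
    have hinner : ∀ w : V, (∑ v, if G.Adj v w ∧ f v = i ∧ mu v = j ∧ f w = j then (1:ℕ) else 0)
        = (if f w = j ∧ ¬ (mu w = i) then 1 else 0) := by
      intro w
      split_ifs with h
      · -- f w = j, mu w ≠ i : exactly one such v
        have hdwi : dC G f w i = 1 := by
          refine hone w i (fun hif => hij (by rw [hif, h.1])) fun himu => h.2 himu.symm
        obtain ⟨v0, hv0⟩ := Finset.card_eq_one.mp hdwi
        have hv0mem : v0 ∈ (G.neighborFinset w).filter fun u => f u = i :=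
          hv0 ▸ Finset.mem_singleton_self v0
        rw [mem_filter, SimpleGraph.mem_neighborFinset] at hv0mem
        have hadj0 : G.Adj v0 w := hv0mem.1.symm
        have hmuv0 : mu v0 = j := by
          rcases hglob hadj0 with h2 | h2
          · rw [← honly v0 (f w) h2, h.1]
          · rw [hv0mem.2] at h2
            rw [hdwi] at h2
            omega
        have hpt : ∀ v : V, (if G.Adj v w ∧ f v = i ∧ mu v = j ∧ f w = j then (1:ℕ) else 0)
            = (if v = v0 then 1 else 0) := by
          intro v
          refine if_congr ⟨fun hx => ?_, fun hx => ?_⟩ rfl rfl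
          · have : v ∈ (G.neighborFinset w).filter fun u => f u = i := by
              rw [mem_filter, SimpleGraph.mem_neighborFinset]
              exact ⟨hx.1.symm, hx.2.1⟩
            rw [hv0, Finset.mem_singleton] at this
            exact this
          · subst hx
            exact ⟨hadj0, hv0mem.2, hmuv0, h.1⟩
        rw [Finset.sum_congr rfl fun v _ => hpt v, Finset.sum_ite_eq' univ v0 fun _ => (1:ℕ),
          if_pos (mem_univ v0)]
      · -- otherwise zero
        refine Finset.sum_eq_zero fun v _ => if_neg fun hx => ?_
        rcases Decidable.em (mu w = i) with hmi | hmi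
        · -- both centers : contradiction with star property
          refine not_both hf hx.1 ⟨?_, ?_⟩
          · have : dC G f v (f w) = p := by rw [hx.2.2.2, ← hx.2.2.1]; exact hdmu v
            omega
          · have : dC G f w (f v) = p := by rw [hx.2.1, ← hmi]; exact hdmu w
            omega
        · exact h ⟨hx.2.2.2, hmi⟩
    rw [Finset.sum_congr rfl fun w _ => hinner w]
    have hpt2 : ∀ w : V, (if f w = j ∧ ¬ (mu w = i) then (1:ℕ) else 0)
        + (if f w = j ∧ mu w = i then (1:ℕ) else 0) = (if f w = j then 1 else 0) := by
      intro w
      split_ifs <;> first | rfl | tauto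
    rw [Finset.card_filter, Finset.card_filter, ← Finset.sum_add_distrib]
    exact Finset.sum_congr rfl fun w _ => hpt2 w
  omega

end Aux5

/-- A 2p-regular (p+2)-star colourable graph (p ≥ 2) on n vertices has
independence number greater than n/4. -/
theorem stmt11 {V : Type*} [Fintype V] [Nonempty V] (G : SimpleGraph V) (p : ℕ)
    (hp : 2 ≤ p)
    (hreg : ∀ v : V, (G.neighborSet v).ncard = 2 * p)
    (hcol : ∃ f : V → Fin (p + 2), IsStarColoring G f) :
    ∃ s : Finset V, (∀ u ∈ s, ∀ v ∈ s, ¬ G.Adj u v) ∧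
      Fintype.card V < 4 * s.card := by
  classical
  obtain ⟨f, hf⟩ := hcol
  have hdeg : ∀ v : V, G.degree v = 2 * p := by
    intro v
    rw [← hreg v, SimpleGraph.degree, SimpleGraph.neighborFinset,
      Set.ncard_eq_toFinset_card']
  choose mu hmufv hdmu honly hone using structure_lemma hf hp hdeg
  set n := Fintype.card V with hn
  set nn : Fin (p+2) → ℕ := fun i => (univ.filter fun v => f v = i).card with hnn
  set u : Fin (p+2) → Fin (p+2) → ℕ :=
    fun i j => (univ.filter fun v => f v = i ∧ mu v = j).card with hu
  have hpair : ∀ i j : Fin (p+2), i ≠ j → p * u i j + u j i = nn j := fun i j hij =>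
    pair_count hf hp hdeg mu hdmu honly hone hij
  have huii : ∀ i, u i i = 0 := by
    intro i
    rw [hu]
    rw [Finset.card_eq_zero, Finset.filter_eq_empty_iff]
    rintro v - ⟨h1, h2⟩
    exact hmufv v (h2.trans h1.symm)
  have husum : ∀ i, ∑ j, u i j = nn i := by
    intro i
    rw [hnn]
    show _ = (univ.filter fun v => f v = i).card
    rw [Finset.card_eq_sum_card_fiberwise (f := mu) (t := univ) (fun x _ => mem_univ _)]
    refine Finset.sum_congr rfl fun j _ => ?_
    rw [hu, Finset.filter_filter]
  have hnnsum : ∑ j, nn j = n := by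
    rw [hn, ← Finset.card_univ]
    exact (Finset.card_eq_sum_card_fiberwise (f := f) (t := univ) (fun x _ => mem_univ _)).symm
  have herase : ∀ i : Fin (p+2), ∑ j ∈ univ.erase i, u i j = nn i := by
    intro i
    have := Finset.add_sum_erase univ (u i) (mem_univ i)
    rw [huii i, zero_add] at this
    rw [this, husum i]
  have hclass : ∀ i : Fin (p+2), (p+2) * nn i = n := by
    intro i
    have hAi : ∀ j ∈ univ.erase i, p * u j i + u i j = nn i := fun j hj =>
      hpair j i (Finset.mem_erase.mp hj).1
    have hcarde : (univ.erase i).card = p + 1 := by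
      rw [Finset.card_erase_of_mem (mem_univ _), card_univ]
      simp
    have h2 : ∑ j ∈ univ.erase i, (p * u j i + u i j) = (p+1) * nn i := by
      rw [Finset.sum_congr rfl hAi, Finset.sum_const, hcarde, smul_eq_mul]
    rw [Finset.sum_add_distrib, ← Finset.mul_sum, herase i] at h2
    set Ai := ∑ j ∈ univ.erase i, u j i with hAidef
    have hAieq : Ai = nn i := by
      have hring : (p+1) * nn i = p * nn i + nn i := by ring
      have : p * Ai = p * nn i := by omega
      exact Nat.eq_of_mul_eq_mul_left (by omega) this
    have h1 : ∑ j ∈ univ.erase i, (p * u i j + u j i) = ∑ j ∈ univ.erase i, nn j := by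
      refine Finset.sum_congr rfl fun j hj => hpair i j (Finset.mem_erase.mp hj).1.symm
    rw [Finset.sum_add_distrib, ← Finset.mul_sum, herase i, ← hAidef, hAieq] at h1
    have h3 : nn i + ∑ j ∈ univ.erase i, nn j = n := by
      rw [Finset.add_sum_erase univ nn (mem_univ i), hnnsum]
    have hring2 : (p+2) * nn i = p * nn i + nn i + nn i := by ring
    omega
  have i0 : Fin (p+2) := ⟨0, by omega⟩
  set m := nn i0 with hm0
  have hm : ∀ i, nn i = m := by
    intro i
    have h1 := hclass i
    have h2 := hclass i0
    have := h1.trans h2.symm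
    exact Nat.eq_of_mul_eq_mul_left (by omega) this
  have hkey : ∀ a b : ℕ, p * a + b = m → p * b + a = m → a ≤ b := by
    intro a b h1 h2
    by_contra hab
    push_neg at hab
    obtain ⟨d, hd⟩ := Nat.exists_eq_add_of_lt hab
    subst hd
    have he1 : p * (b + d + 1) = p*b + p*d + p := by ring
    have he2 : 2 * d ≤ p * d := Nat.mul_le_mul_right d hp
    omega
  have hupair : ∀ i j : Fin (p+2), i ≠ j → (p+1) * u i j = m := by
    intro i j hij
    have h1 := hpair i j hij
    have h2 := hpair j i hij.symm
    rw [hm i] at h2; rw [hm j] at h1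
    have heq : u i j = u j i :=
      le_antisymm (hkey _ _ h1 h2) (hkey _ _ h2 h1)
    have hring : (p+1) * u i j = p * u i j + u i j := by ring
    omega
  -- the independent set
  set k := (p+2)/2 with hk
  have hk1 : 2*k ≤ p + 2 := by omega
  have hk2 : p + 2 ≤ 2*k + 1 := by omega
  have hk3 : 2 ≤ k := by omega
  have hklt : k < p + 2 := by omega
  set K : Finset (Fin (p+2)) := univ.filter (fun c => (c : ℕ) < k) with hK
  have hKcard : K.card = k := by
    have : K = Finset.Iio (⟨k, hklt⟩ : Fin (p+2)) := by
      ext c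
      rw [hK, mem_filter, Finset.mem_Iio, Fin.lt_def]
      simp
    rw [this, Fin.card_Iio]
  set A : Finset V := univ.filter (fun v => ((f v : ℕ) < k) ∧ ¬ ((mu v : ℕ) < k)) with hA
  refine ⟨A, ?_, ?_⟩
  · -- independence
    intro a ha b hb hadj
    rw [hA, mem_filter] at ha hb
    rcases (global hf hp hdeg).2 hadj with h2 | h2
    · have := honly a (f b) h2
      exact ha.2.2 (this ▸ hb.2.1)
    · have := honly b (f a) h2
      exact hb.2.2 (this ▸ ha.2.1)
  · -- cardinality
    set c : Fin (p+2) → ℕ :=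
      fun i => (univ.filter fun v => f v = i ∧ ¬ ((mu v : ℕ) < k)).card with hc
    have hAcard : A.card = ∑ i ∈ K, c i := by
      rw [Finset.card_eq_sum_card_fiberwise (f := f) (t := univ) (fun x _ => mem_univ _),
        Finset.sum_filter]
      refine Finset.sum_congr rfl fun i _ => ?_
      rw [hA, Finset.filter_filter]
      split_ifs with hik
      · rw [hc]
        congr 1
        apply Finset.filter_congr
        intro v _
        constructor
        · rintro ⟨⟨h1, h2⟩, h3⟩; exact ⟨h3, h2⟩
        · rintro ⟨h1, h2⟩; exact ⟨⟨h1 ▸ hik, h2⟩, h1⟩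
      · rw [Finset.card_eq_zero, Finset.filter_eq_empty_iff]
        rintro v - ⟨⟨h1, h2⟩, h3⟩
        exact hik (h3 ▸ h1)
    have hci : ∀ i ∈ K, (p+1) * c i + (k-1) * m = (p+1) * m := by
      intro i hiK
      have hik : (i : ℕ) < k := (mem_filter.mp hiK).2
      set w : ℕ := (univ.filter fun v => f v = i ∧ ((mu v : ℕ) < k)).card with hw
      have hcw : w + c i = nn i := by
        rw [hw, hc]
        have := Finset.card_filter_add_card_filter_not
          (s := univ.filter fun v => f v = i) (p := fun v => ((mu v : ℕ) < k))
        rw [Finset.filter_filter, Finset.filter_filter] at this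
        exact this
      have hwK : w = ∑ j ∈ K, u i j := by
        rw [hw, Finset.card_eq_sum_card_fiberwise (f := mu) (t := univ) (fun x _ => mem_univ _),
          Finset.sum_filter]
        refine Finset.sum_congr rfl fun j _ => ?_
        rw [Finset.filter_filter]
        split_ifs with hjk
        · rw [hu]
          congr 1
          apply Finset.filter_congr
          intro v _
          constructor
          · rintro ⟨⟨h1, h2⟩, h3⟩; exact ⟨h1, h3⟩
          · rintro ⟨h1, h2⟩; exact ⟨⟨h1, h2 ▸ hjk⟩, h2⟩
        · rw [Finset.card_eq_zero, Finset.filter_eq_empty_iff]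
          rintro v - ⟨⟨h1, h2⟩, h3⟩
          exact hjk (h3 ▸ h2)
      have hwsum : (p+1) * w = (k-1) * m := by
        rw [hwK, Finset.mul_sum]
        rw [← Finset.add_sum_erase K (fun j => (p+1) * u i j) hiK, huii i, Nat.mul_zero,
          zero_add]
        rw [Finset.sum_congr rfl fun j hj => hupair i j (Finset.mem_erase.mp hj).1.symm]
        rw [Finset.sum_const, smul_eq_mul, Finset.card_erase_of_mem hiK, hKcard]
      have : (p+1) * w + (p+1) * c i = (p+1) * nn i := by
        rw [← Nat.mul_add, hcw]
      rw [hwsum, hm i] at this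
      omega
    have hAtot : (p+1) * A.card + k * ((k-1) * m) = k * ((p+1) * m) := by
      rw [hAcard, Finset.mul_sum]
      have h1 : ∑ i ∈ K, ((p+1) * c i + (k-1)*m) = ∑ i ∈ K, (p+1)*m :=
        Finset.sum_congr rfl hci
      rw [Finset.sum_add_distrib, Finset.sum_const, Finset.sum_const, hKcard,
        smul_eq_mul, smul_eq_mul] at h1
      exact h1
    -- final arithmetic
    have hm1 : 1 ≤ m := by
      rcases Nat.eq_zero_or_pos m with h0 | h1
      · exfalso
        have := hclass i0
        rw [← hm0] at this
        rw [h0, Nat.mul_zero] at this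
        have : (0:ℕ) < n := Fintype.card_pos
        omega
      · exact h1
    have hnm : n = (p+2)*m := by
      have := hclass i0
      rw [← hm0] at this
      omega
    obtain ⟨l, hl⟩ : ∃ l, k = l + 1 := ⟨k - 1, by omega⟩
    have hl1 : 1 ≤ l := by omega
    show n < 4 * A.card
    set X := A.card with hX
    rcases (by omega : p + 2 = 2*k ∨ p + 2 = 2*k + 1) with hcase | hcase
    · -- p = 2l
      have hpl : p = 2*l := by omega
      have hkk : l + 1 - 1 = l := by omega
      rw [hnm, hpl]
      rw [hpl, hl, hkk] at hAtot
      nlinarith [hAtot, hm1, hl1]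
    · have hpl : p = 2*l + 1 := by omega
      have hkk : l + 1 - 1 = l := by omega
      rw [hnm, hpl]
      rw [hpl, hl, hkk] at hAtot
      nlinarith [hAtot, hm1, hl1]
end

section
/- Let p ≥ 2 and let G be a 2p-regular (p+2)-star colourable graph. Then the chromatic number of G satisfies χ(G) ≤ 3·log₂(p+2). -/
/-!
Fix a vertex `v` of `G` and count the colours of its `2p` neighbours. Properness hides the colour
of `v`, so only `p + 1` colours are available, and a short count shows that at least `p`
neighbours of `v` carry a colour that occurs at least twice around `v`; call these the
out-neighbours of `v`. The star condition says that no edge is an out-edge in both directions,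
so `v` has at most `p` in-neighbours. Out- and in-degrees have the same sum, hence both equal `p`
everywhere: every edge is an out-edge in exactly one direction, and around every vertex exactly
one colour `g v` is repeated. So each edge `vw` satisfies `f w = g v` or `f v = g w`.

Now colour `v` by a pair `(b, i)`, where `i` is a binary digit in which `f v` and `g v` differ
and `b` is that digit of `f v`. This is proper: if `f w = g v` and `v`, `w` got the same pair,
the digit `i` of `f w = g v` would equal that of `f v`. It uses
`2 ⌈log₂ (p + 2)⌉ ≤ 3 log₂ (p + 2)` colours.
-/

open Finset

section Counting

variable {V α : Type*} [Fintype V] {G : SimpleGraph V} [DecidableRel G.Adj] [DecidableEq α]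

def nbrColorCount (G : SimpleGraph V) [DecidableRel G.Adj] (f : V → α) (v : V) (c : α) : ℕ :=
  #{w ∈ G.neighborFinset v | f w = c}

def RepeatsColor (G : SimpleGraph V) [DecidableRel G.Adj] (f : V → α) (v w : V) : Prop :=
  G.Adj v w ∧ 1 < nbrColorCount G f v (f w)

instance (G : SimpleGraph V) [DecidableRel G.Adj] (f : V → α) (v w : V) :
    Decidable (RepeatsColor G f v w) :=
  inferInstanceAs (Decidable (_ ∧ _))

def outNbrs (G : SimpleGraph V) [DecidableRel G.Adj] (f : V → α) (v : V) : Finset V :=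
  {w | RepeatsColor G f v w}

def inNbrs (G : SimpleGraph V) [DecidableRel G.Adj] (f : V → α) (v : V) : Finset V :=
  {w | RepeatsColor G f w v}

def repeatedColors [Fintype α] (G : SimpleGraph V) [DecidableRel G.Adj] (f : V → α) (v : V) :
    Finset α :=
  {c | 1 < nbrColorCount G f v c}

variable {f : V → α}

@[simp]
lemma mem_outNbrs {v w : V} : w ∈ outNbrs G f v ↔ RepeatsColor G f v w := by
  simp only [outNbrs, mem_filter, mem_univ, true_and]

@[simp]
lemma mem_inNbrs {v w : V} : w ∈ inNbrs G f v ↔ RepeatsColor G f w v := by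
  simp only [inNbrs, mem_filter, mem_univ, true_and]

@[simp]
lemma mem_repeatedColors [Fintype α] {v : V} {c : α} :
    c ∈ repeatedColors G f v ↔ 1 < nbrColorCount G f v c := by
  simp only [repeatedColors, mem_filter, mem_univ, true_and]

lemma nbrColorCount_self (hf : ∀ ⦃u w : V⦄, G.Adj u w → f u ≠ f w) (v : V) :
    nbrColorCount G f v (f v) = 0 := by
  simp only [nbrColorCount, card_eq_zero, filter_eq_empty_iff, SimpleGraph.mem_neighborFinset]
  exact fun w hw => hf hw.symm

lemma outNbrs_subset_neighborFinset (v : V) : outNbrs G f v ⊆ G.neighborFinset v :=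
  fun w hw => (G.mem_neighborFinset v w).2 (mem_outNbrs.1 hw).1

lemma inNbrs_subset_neighborFinset (v : V) : inNbrs G f v ⊆ G.neighborFinset v :=
  fun w hw => (G.mem_neighborFinset v w).2 (mem_inNbrs.1 hw).1.symm

lemma sum_card_outNbrs_eq_sum_card_inNbrs :
    ∑ v, #(outNbrs G f v) = ∑ v, #(inNbrs G f v) :=
  sum_card_bipartiteAbove_eq_sum_card_bipartiteBelow (RepeatsColor G f)

lemma outNbrs_eq_empty_of_repeatedColors_eq_empty [Fintype α] {v : V}
    (h : repeatedColors G f v = ∅) : outNbrs G f v = ∅ := by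
  rw [eq_empty_iff_forall_notMem] at h ⊢
  exact fun w hw => h (f w) (mem_repeatedColors.2 (mem_outNbrs.1 hw).2)

/-- The neighbours outside `outNbrs` get pairwise distinct colours, different from the repeated
colours and from the colour of `v`. -/
lemma degree_add_card_repeatedColors_lt [Fintype α]
    (hf : ∀ ⦃u w : V⦄, G.Adj u w → f u ≠ f w) (v : V) :
    G.degree v + #(repeatedColors G f v) < #(outNbrs G f v) + Fintype.card α := by
  classical
  set L := G.neighborFinset v \ outNbrs G f v
  have hL : ∀ w ∈ L, G.Adj v w ∧ nbrColorCount G f v (f w) ≤ 1 := by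
    intro w hw
    simp only [L, mem_outNbrs, RepeatsColor, mem_sdiff, not_and, not_lt,
      SimpleGraph.mem_neighborFinset] at hw
    exact ⟨hw.1, hw.2 hw.1⟩
  have hinj : Set.InjOn f L := by
    intro w₁ hw₁ w₂ hw₂ heq
    have h₁ := hL w₁ hw₁
    have h₂ := hL w₂ hw₂
    refine card_le_one.1 h₁.2 w₁ ?_ w₂ ?_ <;> simp [h₁.1, h₂.1, heq]
  have hdisj : Disjoint (L.image f) (repeatedColors G f v) := by
    rw [disjoint_left]
    rintro _ hc hrep
    obtain ⟨w, hw, rfl⟩ := mem_image.1 hc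
    exact absurd (hL w hw).2 (not_le.2 (mem_repeatedColors.1 hrep))
  have hsub : L.image f ∪ repeatedColors G f v ⊆ univ.erase (f v) := by
    intro c hc
    refine mem_erase.2 ⟨?_, mem_univ c⟩
    rintro rfl
    rcases mem_union.1 hc with hc | hc
    · obtain ⟨w, hw, hfw⟩ := mem_image.1 hc
      exact hf (hL w hw).1 hfw.symm
    · simp [nbrColorCount_self hf] at hc
  have hcard := card_le_card hsub
  rw [card_union_of_disjoint hdisj, card_image_of_injOn hinj, card_erase_of_mem (mem_univ _),
    card_univ] at hcard
  have hsplit : #L + #(outNbrs G f v) = G.degree v := by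
    rw [← G.card_neighborFinset_eq_degree]
    exact card_sdiff_add_card_eq_card (outNbrs_subset_neighborFinset v)
  have : 0 < Fintype.card α := Fintype.card_pos_iff.2 ⟨f v⟩
  omega

lemma IsStarColoring.not_repeatsColor_and_repeatsColor_s12 (hf : IsStarColoring G f) {v w : V} :
    ¬(RepeatsColor G f v w ∧ RepeatsColor G f w v) := by
  rintro ⟨⟨hvw, hv⟩, -, hw⟩
  obtain ⟨u, hu, huw⟩ := exists_mem_ne hv w
  obtain ⟨x, hx, hxv⟩ := exists_mem_ne hw v
  simp only [mem_filter, SimpleGraph.mem_neighborFinset] at hu hx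
  refine hf.2 hu.1.symm hvw hx.1 huw ?_ hxv.symm ⟨hu.2, hx.2.symm⟩
  rintro rfl
  exact hf.1 hvw (hx.2.symm.trans hu.2)

lemma IsStarColoring.disjoint_outNbrs_inNbrs (hf : IsStarColoring G f) (v : V) :
    Disjoint (outNbrs G f v) (inNbrs G f v) :=
  disjoint_left.2 fun _ hout hin =>
    hf.not_repeatsColor_and_repeatsColor_s12 ⟨mem_outNbrs.1 hout, mem_inNbrs.1 hin⟩

lemma IsStarColoring.card_outNbrs_add_card_inNbrs_le (hf : IsStarColoring G f) (v : V) :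
    #(outNbrs G f v) + #(inNbrs G f v) ≤ G.degree v := by
  classical
  rw [← card_union_of_disjoint (hf.disjoint_outNbrs_inNbrs v),
    ← G.card_neighborFinset_eq_degree]
  exact card_le_card (union_subset (outNbrs_subset_neighborFinset v)
    (inNbrs_subset_neighborFinset v))

lemma IsStarColoring.repeatsColor_or_repeatsColor_of_card_eq (hf : IsStarColoring G f) {v w : V}
    (hv : #(outNbrs G f v) + #(inNbrs G f v) = G.degree v) (hvw : G.Adj v w) :
    RepeatsColor G f v w ∨ RepeatsColor G f w v := by
  classical
  have hcover : outNbrs G f v ∪ inNbrs G f v = G.neighborFinset v := by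
    refine eq_of_subset_of_card_le (union_subset (outNbrs_subset_neighborFinset v)
      (inNbrs_subset_neighborFinset v)) ?_
    rw [card_union_of_disjoint (hf.disjoint_outNbrs_inNbrs v), hv, G.card_neighborFinset_eq_degree]
  have hw : w ∈ outNbrs G f v ∪ inNbrs G f v := hcover ▸ (G.mem_neighborFinset v w).2 hvw
  simpa using hw

end Counting

section Regular

variable {V : Type*} [Fintype V] {G : SimpleGraph V} [DecidableRel G.Adj] {p : ℕ}
  {f : V → Fin (p + 2)}

lemma le_card_outNbrs (hp : 2 ≤ p) (hreg : G.IsRegularOfDegree (2 * p))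
    (hf : ∀ ⦃u w : V⦄, G.Adj u w → f u ≠ f w) (v : V) : p ≤ #(outNbrs G f v) := by
  have hcount := degree_add_card_repeatedColors_lt hf v
  rw [hreg v, Fintype.card_fin] at hcount
  have hempty : #(repeatedColors G f v) = 0 → #(outNbrs G f v) = 0 := by
    simpa only [card_eq_zero] using outNbrs_eq_empty_of_repeatedColors_eq_empty
  omega

variable (hp : 2 ≤ p) (hreg : G.IsRegularOfDegree (2 * p)) (hf : IsStarColoring G f)
include hp hreg hf

/-- `p ≤ #outNbrs` and `#outNbrs + #inNbrs ≤ 2p` force `#inNbrs ≤ #outNbrs` everywhere, while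
the two sums agree. -/
lemma card_outNbrs_eq_and_card_inNbrs_eq (v : V) :
    #(outNbrs G f v) = p ∧ #(inNbrs G f v) = p := by
  have hbound : ∀ u, #(outNbrs G f u) + #(inNbrs G f u) ≤ 2 * p := fun u =>
    hreg u ▸ hf.card_outNbrs_add_card_inNbrs_le u
  have hle : ∀ u ∈ univ, #(inNbrs G f u) ≤ #(outNbrs G f u) := fun u _ => by
    have := le_card_outNbrs hp hreg hf.1 u
    have := hbound u
    omega
  have heq := (sum_eq_sum_iff_of_le hle).1 sum_card_outNbrs_eq_sum_card_inNbrs.symm v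
    (mem_univ v)
  have := le_card_outNbrs hp hreg hf.1 v
  have := hbound v
  omega

lemma card_repeatedColors_eq_one (v : V) : #(repeatedColors G f v) = 1 := by
  have hcount := degree_add_card_repeatedColors_lt hf.1 v
  rw [hreg v, Fintype.card_fin] at hcount
  have hout := (card_outNbrs_eq_and_card_inNbrs_eq hp hreg hf v).1
  have hempty : #(repeatedColors G f v) = 0 → #(outNbrs G f v) = 0 := by
    simpa only [card_eq_zero] using outNbrs_eq_empty_of_repeatedColors_eq_empty
  omega

lemma exists_partner_coloring :
    ∃ g : V → Fin (p + 2), (∀ v, g v ≠ f v) ∧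
      ∀ ⦃v w : V⦄, G.Adj v w → f w = g v ∨ f v = g w := by
  choose g hg using fun v => card_eq_one.1 (card_repeatedColors_eq_one hp hreg hf v)
  have hmem : ∀ {v w}, RepeatsColor G f v w → f w = g v := fun {v w} h => by
    simpa [hg v] using mem_repeatedColors.2 h.2
  refine ⟨g, fun v hgv => ?_, fun v w hvw => ?_⟩
  · have : g v ∈ repeatedColors G f v := by simp [hg v]
    simp [hgv, nbrColorCount_self hf.1] at this
  · have hv := card_outNbrs_eq_and_card_inNbrs_eq hp hreg hf v
    rcases hf.repeatsColor_or_repeatsColor_of_card_eq (by rw [hreg v]; omega) hvw with h | h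
    · exact Or.inl (hmem h)
    · exact Or.inr (hmem h)

end Regular

lemma exists_testBit_ne_of_ne {n a b : ℕ} (ha : a < 2 ^ n) (hb : b < 2 ^ n) (hab : a ≠ b) :
    ∃ i < n, a.testBit i ≠ b.testBit i := by
  by_contra! h
  refine hab (Nat.eq_of_testBit_eq fun i => ?_)
  by_cases hi : i < n
  · exact h i hi
  · have hi : 2 ^ n ≤ 2 ^ i := Nat.pow_le_pow_right two_pos (not_lt.1 hi)
    rw [Nat.testBit_lt_two_pow (ha.trans_le hi), Nat.testBit_lt_two_pow (hb.trans_le hi)]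

lemma SimpleGraph.colorable_two_mul_clog_of_partner {V : Type*} {G : SimpleGraph V} {n : ℕ}
    (f g : V → Fin n) (hfg : ∀ v, g v ≠ f v)
    (hedge : ∀ ⦃v w : V⦄, G.Adj v w → f w = g v ∨ f v = g w) :
    G.Colorable (2 * Nat.clog 2 n) := by
  have hlt : ∀ i : Fin n, (i : ℕ) < 2 ^ Nat.clog 2 n :=
    fun i => i.isLt.trans_le (Nat.le_pow_clog one_lt_two n)
  choose t ht hbit using fun v =>
    exists_testBit_ne_of_ne (hlt (f v)) (hlt (g v)) (Fin.val_injective.ne (hfg v).symm)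
  let C : G.Coloring (Bool × Fin (Nat.clog 2 n)) :=
    Coloring.mk (fun v => ((f v : ℕ).testBit (t v), ⟨t v, ht v⟩)) fun {v w} hvw h => by
      simp only [Prod.mk.injEq, Fin.mk.injEq] at h
      obtain ⟨hb, htw⟩ := h
      rw [← htw] at hb
      rcases hedge hvw with h | h
      · exact hbit v (h ▸ hb)
      · exact hbit w (htw ▸ h ▸ hb).symm
  simpa using C.colorable

lemma two_mul_clog_le_three_mul_logb {n : ℕ} (hn : 4 ≤ n) :
    ((2 * Nat.clog 2 n : ℕ) : ℝ) ≤ 3 * Real.logb 2 n := by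
  set c := Nat.clog 2 n
  have hc : 2 ≤ c := by
    by_contra! h
    have := (Nat.clog_le_iff_le_pow one_lt_two).1 (Nat.le_of_lt_succ h)
    omega
  have hlog4 : (2 : ℝ) ≤ Real.logb 2 n := by
    rw [Real.le_logb_iff_rpow_le one_lt_two (by positivity)]
    exact_mod_cast hn
  have hpred : ((c - 1 : ℕ) : ℝ) < Real.logb 2 n := by
    rw [Real.lt_logb_iff_rpow_lt one_lt_two (by positivity), Real.rpow_natCast]
    exact_mod_cast Nat.pow_pred_clog_lt_self one_lt_two (by omega)
  rcases hc.eq_or_lt with h | h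
  · rw [← h]
    push_cast
    linarith
  · have : ((c - 1 : ℕ) : ℝ) = c - 1 := by push_cast [hc.trans' one_le_two]; ring
    have : (3 : ℝ) ≤ c := by exact_mod_cast h
    push_cast
    linarith

/-- A 2p-regular (p+2)-star colourable graph (p ≥ 2) has chromatic number at
most 3·log₂(p+2). -/
theorem stmt12 {V : Type*} [Fintype V] (G : SimpleGraph V) (p : ℕ) (hp : 2 ≤ p)
    (hreg : ∀ v : V, (G.neighborSet v).ncard = 2 * p)
    (hcol : ∃ f : V → Fin (p + 2), IsStarColoring G f) :
    (G.chromaticNumber.toNat : ℝ) ≤ 3 * Real.logb 2 (p + 2) := by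
  classical
  obtain ⟨f, hf⟩ := hcol
  have hreg' : G.IsRegularOfDegree (2 * p) := fun v => by
    rw [← hreg v, ← G.card_neighborFinset_eq_degree, ← Set.ncard_coe_finset,
      SimpleGraph.coe_neighborFinset]
  obtain ⟨g, hgf, hedge⟩ := exists_partner_coloring hp hreg' hf
  have hχ := (G.colorable_two_mul_clog_of_partner f g hgf hedge).chromaticNumber_le
  calc (G.chromaticNumber.toNat : ℝ) ≤ ((2 * Nat.clog 2 (p + 2) : ℕ) : ℝ) := by
        exact_mod_cast ENat.toNat_le_of_le_natCast hχ
    _ ≤ 3 * Real.logb 2 (p + 2) := by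
        exact_mod_cast two_mul_clog_le_three_mul_logb (n := p + 2) (by omega)
end

section
/- For each p ≥ 2, let G_{2p} be the graph whose vertices are ordered pairs (i,j) with i,j ∈ {0,...,p+1} and i ≠ j, where (i,j) is adjacent to (k,ℓ) iff either (k = j and ℓ ∉ {i,j}) or (k ∉ {i,j} and ℓ = i). Then G_{2p} is a 2p-regular graph on (p+1)(p+2) vertices which is (p+2)-star colourable. -/
/-- The vertex set of the graph G_{2p}: ordered pairs (i,j), i ≠ j. -/
def G2pVert (p : ℕ) := {x : Fin (p + 2) × Fin (p + 2) // x.1 ≠ x.2}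

instance (p : ℕ) : Fintype (G2pVert p) :=
  inferInstanceAs (Fintype {x : Fin (p + 2) × Fin (p + 2) // x.1 ≠ x.2})

/-- The graph G_{2p}: (i,j) ~ (k,l) iff (k = j and l ∉ {i,j}) or
(k ∉ {i,j} and l = i). -/
def G2p (p : ℕ) : SimpleGraph (G2pVert p) where
  Adj a b := (b.1.1 = a.1.2 ∧ b.1.2 ≠ a.1.1 ∧ b.1.2 ≠ a.1.2) ∨
             (b.1.1 ≠ a.1.1 ∧ b.1.1 ≠ a.1.2 ∧ b.1.2 = a.1.1)
  symm := by
    constructor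
    rintro ⟨⟨i, j⟩, hij⟩ ⟨⟨k, l⟩, hkl⟩ (⟨h1, h2, h3⟩ | ⟨h1, h2, h3⟩)
    · subst h1
      exact Or.inr ⟨hij, Ne.symm h2, rfl⟩
    · subst h3
      exact Or.inl ⟨rfl, Ne.symm h2, Ne.symm hij⟩
  loopless := by
    constructor
    rintro ⟨⟨i, j⟩, hij⟩ (⟨h1, _, _⟩ | ⟨h1, _, _⟩)
    · exact hij h1
    · exact h1 rfl

/-!
Colour the vertex `(i, j)` by `i`. Adjacent vertices get different colours, and a neighbour of
`(k, l)` whose colour `x` differs from `l` must be `(x, k)`; so two distinct neighbours of `b`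
with the same colour both have colour `b.2`. On a bicoloured path `a b c d` this gives
`c.1 = b.2` (from `a, c`) and `b.1 = c.2` (from `b, d`), i.e. `c` is the reverse of `b`, and
`(k, l)`, `(l, k)` are never adjacent.
The neighbours of `(i, j)` are `{j} × {i, j}ᶜ ∪ {i, j}ᶜ × {i}`, which has `2p` elements.
-/

namespace G2p

variable {p : ℕ}

theorem card_vert (p : ℕ) : Fintype.card (G2pVert p) = (p + 1) * (p + 2) := by
  have h : Fintype.card (G2pVert p) = (Finset.univ : Finset (Fin (p + 2))).offDiag.card := by
    refine (Fintype.card_subtype (fun x : Fin (p + 2) × Fin (p + 2) => x.1 ≠ x.2)).trans ?_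
    congr 1
    ext x
    simp [Finset.mem_offDiag]
  rw [h, Finset.offDiag_card, Finset.card_univ, Fintype.card_fin, ← Nat.mul_sub_one, mul_comm]
  rfl

theorem image_val_neighborSet (v : G2pVert p) :
    (fun w : G2pVert p => w.1) '' (G2p p).neighborSet v =
      {v.1.2} ×ˢ {v.1.1, v.1.2}ᶜ ∪ {v.1.1, v.1.2}ᶜ ×ˢ {v.1.1} := by
  obtain ⟨⟨i, j⟩, hij⟩ := v
  ext ⟨k, l⟩
  simp only [Set.mem_image, Set.mem_union, Set.mem_prod, Set.mem_singleton_iff,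
    Set.mem_compl_iff, Set.mem_insert_iff, not_or, and_assoc]
  constructor
  · rintro ⟨⟨x, _⟩, hadj, rfl⟩
    exact hadj
  · intro h
    have hkl : k ≠ l := by
      rcases h with ⟨rfl, -, hl⟩ | ⟨hk, -, rfl⟩
      exacts [Ne.symm hl, hk]
    exact ⟨⟨(k, l), hkl⟩, h, rfl⟩

theorem ncard_neighborSet (v : G2pVert p) : ((G2p p).neighborSet v).ncard = 2 * p := by
  have hpair : ({v.1.1, v.1.2} : Set (Fin (p + 2)))ᶜ.ncard = p := by
    rw [Set.ncard_compl, Set.ncard_pair v.2, Nat.card_eq_fintype_card, Fintype.card_fin]; rfl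
  rw [← Set.ncard_image_of_injective (f := fun w : G2pVert p => w.1) _ Subtype.val_injective,
    image_val_neighborSet, Set.ncard_union_eq, Set.ncard_prod, Set.ncard_prod, hpair]
  · simp only [Set.ncard_singleton]
    ring
  · rw [Set.disjoint_left]
    rintro ⟨k, l⟩ ⟨-, hl⟩ ⟨-, rfl⟩
    simp at hl

theorem fst_ne_fst_of_adj {a b : G2pVert p} (h : (G2p p).Adj a b) : a.1.1 ≠ b.1.1 := by
  rcases h with ⟨hb, -⟩ | ⟨hb, -⟩
  · exact hb ▸ a.2
  · exact Ne.symm hb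

theorem fst_eq_snd_of_adj_of_adj {a b c : G2pVert p} (hba : (G2p p).Adj b a)
    (hbc : (G2p p).Adj b c) (hfst : a.1.1 = c.1.1) (hac : a ≠ c) : a.1.1 = b.1.2 := by
  rcases hba with ⟨ha, -⟩ | ⟨-, ha, ha'⟩
  · exact ha
  rcases hbc with ⟨hc, -⟩ | ⟨-, -, hc'⟩
  · exact absurd (hfst.trans hc) ha
  · exact absurd (Subtype.ext (Prod.ext hfst (ha'.trans hc'.symm))) hac

theorem not_adj_of_swap {b c : G2pVert p} (h₁ : c.1.1 = b.1.2) (h₂ : c.1.2 = b.1.1) :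
    ¬(G2p p).Adj b c := by
  rintro (⟨-, hc, -⟩ | ⟨-, hc, -⟩)
  exacts [hc h₂, hc h₁]

theorem isStarColoring_fst : IsStarColoring (G2p p) (fun v => v.1.1) := by
  refine ⟨fun _ _ => fst_ne_fst_of_adj, ?_⟩
  rintro a b c d hab hbc hcd hac - hbd ⟨hfac, hfbd⟩
  have hc : c.1.1 = b.1.2 := hfac.symm.trans (fst_eq_snd_of_adj_of_adj hab.symm hbc hfac hac)
  have hb : b.1.1 = c.1.2 := fst_eq_snd_of_adj_of_adj hbc.symm hcd hfbd hbd
  exact not_adj_of_swap hc hb.symm hbc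

end G2p

theorem stmt14_general (p : ℕ) :
    Fintype.card (G2pVert p) = (p + 1) * (p + 2) ∧
    (∀ v : G2pVert p, ((G2p p).neighborSet v).ncard = 2 * p) ∧
    ∃ f : G2pVert p → Fin (p + 2), IsStarColoring (G2p p) f :=
  ⟨G2p.card_vert p, G2p.ncard_neighborSet, _, G2p.isStarColoring_fst⟩

/-- G_{2p} is a 2p-regular graph on (p+1)(p+2) vertices which is
(p+2)-star colourable. -/
theorem stmt14 (p : ℕ) (hp : 2 ≤ p) :
    Fintype.card (G2pVert p) = (p + 1) * (p + 2) ∧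
    (∀ v : G2pVert p, ((G2p p).neighborSet v).ncard = 2 * p) ∧
    ∃ f : G2pVert p → Fin (p + 2), IsStarColoring (G2p p) f :=
  stmt14_general p
end

section
/- For each p ≥ 2, the graph G_{2p} is vertex-transitive and edge-transitive. -/
/-!
Every permutation `e` of the ground set induces the automorphism `(x, y) ↦ (e x, e y)` of `G2p p`.
A vertex is an ordered pair of distinct points, so the symmetric group acts transitively on vertices.
Every edge can be written as `{(i, j), (j, l)}` with `i, j, l` distinct, and the symmetric group
is 3-transitive, so it also acts transitively on edges.
-/

namespace G2p

variable {p : ℕ}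

def isoOfPerm (e : Equiv.Perm (Fin (p + 2))) : G2p p ≃g G2p p where
  toEquiv := (e.prodCongr e).subtypeEquiv fun x => by simp [e.injective.eq_iff]
  map_rel_iff' := by
    rintro ⟨⟨i, j⟩, hij⟩ ⟨⟨k, l⟩, hkl⟩
    show (e k = e j ∧ e l ≠ e i ∧ e l ≠ e j) ∨ (e k ≠ e i ∧ e k ≠ e j ∧ e l = e i) ↔ _
    simp [e.injective.eq_iff, G2p]

@[simp]
lemma isoOfPerm_apply_val (e : Equiv.Perm (Fin (p + 2))) (v : G2pVert p) :
    (isoOfPerm e v).1 = (e v.1.1, e v.1.2) := rfl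

/-- The first kind of adjacency in the definition of `G2p`; the second is its reverse. -/
def Follows (a b : G2pVert p) : Prop :=
  b.1.1 = a.1.2 ∧ b.1.2 ≠ a.1.1 ∧ b.1.2 ≠ a.1.2

lemma exists_follows_of_adj {a b : G2pVert p} (h : (G2p p).Adj a b) :
    ∃ x y, Follows x y ∧ s(x, y) = s(a, b) := by
  rcases h with hab | ⟨hba₁, hba₂, hba₃⟩
  · exact ⟨a, b, hab, rfl⟩
  · exact ⟨b, a, ⟨hba₃.symm, Ne.symm hba₂, fun h => a.2 (h.trans hba₃).symm⟩, Sym2.eq_swap⟩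

lemma exists_iso_apply_eq (u v : G2pVert p) : ∃ φ : G2p p ≃g G2p p, φ u = v := by
  obtain ⟨e, he⟩ := Equiv.Perm.exists_extending_pair ![u.1.1, u.1.2] ![v.1.1, v.1.2]
    (by simp [u.2]) (by simp [v.2])
  exact ⟨isoOfPerm e, Subtype.ext (Prod.ext (he 0) (he 1))⟩

lemma exists_iso_apply_eq_of_follows {a b c d : G2pVert p} (hab : Follows a b)
    (hcd : Follows c d) : ∃ φ : G2p p ≃g G2p p, φ a = c ∧ φ b = d := by
  have injective_triple {u v : G2pVert p} (huv : Follows u v) :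
      Function.Injective ![u.1.1, u.1.2, v.1.2] := by
    obtain ⟨-, h₁, h₂⟩ := huv
    intro x y
    fin_cases x <;> fin_cases y <;> simp [u.2, u.2.symm, h₁, h₂, h₁.symm, h₂.symm]
  obtain ⟨e, he⟩ := Equiv.Perm.exists_extending_pair _ _
    (injective_triple hab) (injective_triple hcd)
  refine ⟨isoOfPerm e, Subtype.ext (Prod.ext (he 0) (he 1)), Subtype.ext (Prod.ext ?_ (he 2))⟩
  simpa [hab.1, hcd.1] using he 1

end G2p

theorem stmt15_general (p : ℕ) :
    (∀ u v : G2pVert p, ∃ φ : G2p p ≃g G2p p, φ u = v) ∧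
    (∀ a b c d : G2pVert p, (G2p p).Adj a b → (G2p p).Adj c d →
      ∃ φ : G2p p ≃g G2p p, s(φ a, φ b) = s(c, d)) := by
  refine ⟨G2p.exists_iso_apply_eq, fun a b c d hab hcd => ?_⟩
  obtain ⟨x, y, hxy, hab⟩ := G2p.exists_follows_of_adj hab
  obtain ⟨x', y', hxy', hcd⟩ := G2p.exists_follows_of_adj hcd
  obtain ⟨φ, hx, hy⟩ := G2p.exists_iso_apply_eq_of_follows hxy hxy'
  refine ⟨φ, ?_⟩
  rw [← Sym2.map_mk, ← hab, Sym2.map_mk, hx, hy, hcd]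

/-- G_{2p} is vertex-transitive and edge-transitive. -/
theorem stmt15 (p : ℕ) (hp : 2 ≤ p) :
    (∀ u v : G2pVert p, ∃ φ : G2p p ≃g G2p p, φ u = v) ∧
    (∀ a b c d : G2pVert p, (G2p p).Adj a b → (G2p p).Adj c d →
      ∃ φ : G2p p ≃g G2p p, s(φ a, φ b) = s(c, d)) :=
  stmt15_general p
end
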